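/- arXiv:2302.03809 — 5 statements merged into one kernel-verified Lean document; each statement's English description precedes it below -/
import Mathlib

section
/- Let κ, κ̄ : [a,b] → ℝ be continuous, 0 ≤ ℓ < n, f continuous, and y, ȳ ∈ Cⁿ([a,b]) with y^{(n)} + κ y^{(ℓ)} = f, ȳ^{(n)} + κ̄ ȳ^{(ℓ)} = f, and y^{(j)}(a) = ȳ^{(j)}(a) for j < n. Assume the Lagrange kernel K̄ of u ↦ u^{(n)} + κ̄ u^{(ℓ)} satisfies K̄(s;r) ≥ 0 whenever s > r in [a,b], and y^{(ℓ)} > 0 almost everywhere on [a,b]. If κ ≤ κ̄ on [a,b], then y ≥ ȳ on [a,b]; if κ ≥ κ̄, then y ≤ ȳ on [a,b]. -/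
open MeasureTheory
open Set intervalIntegral Real


/-- Forward Grönwall estimate for the sum of squares of a finite family of
functions whose derivatives are bounded by `C * sqrt (sum of squares)`. -/
lemma psi_gronwall_fwd {α β : ℝ} {m : ℕ} (D D' : Fin m → ℝ → ℝ) (C : ℝ) (hC : 0 ≤ C)
    (hder : ∀ i, ∀ t ∈ Icc α β, HasDerivWithinAt (D i) (D' i t) (Icc α β) t)
    (hbnd : ∀ i, ∀ t ∈ Icc α β,
      |D' i t| ≤ C * Real.sqrt (∑ j, (D j t) ^ 2)) :
    ∀ t ∈ Icc α β, (∑ j, (D j t) ^ 2) ≤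
      (∑ j, (D j α) ^ 2) * Real.exp ((2 * m * C) * (t - α)) := by
  set ψ : ℝ → ℝ := fun t => ∑ j, (D j t) ^ 2 with hψ
  set ψ' : ℝ → ℝ := fun t => ∑ j, (2 * D j t * D' j t) with hψ'
  have hψnonneg : ∀ t, 0 ≤ ψ t := fun t => Finset.sum_nonneg fun j _ => sq_nonneg _
  have hDle : ∀ j t, |D j t| ≤ Real.sqrt (ψ t) := by
    intro j t
    rw [← Real.sqrt_sq_eq_abs]
    exact Real.sqrt_le_sqrt (Finset.single_le_sum (f := fun j => (D j t)^2)
      (fun j _ => sq_nonneg _) (Finset.mem_univ j))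
  have hderψ : ∀ t ∈ Icc α β, HasDerivWithinAt ψ (ψ' t) (Icc α β) t := by
    intro t ht
    have : HasDerivWithinAt (fun u => ∑ j, (D j u) ^ 2)
        (∑ j, (2 * D j t * D' j t)) (Icc α β) t := by
      apply HasDerivWithinAt.fun_sum
      intro j _
      have h := (hder j t ht).fun_mul (hder j t ht)
      have h2 : D' j t * D j t + D j t * D' j t = 2 * D j t * D' j t := by ring
      simpa [pow_two, h2] using h
    exact this
  have hcont : ContinuousOn ψ (Icc α β) := fun t ht => (hderψ t ht).continuousWithinAt
  have hbndψ : ∀ t ∈ Icc α β, |ψ' t| ≤ (2 * m * C) * |ψ t| := by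
    intro t ht
    have h1 : |ψ' t| ≤ ∑ j : Fin m, |2 * D j t * D' j t| := Finset.abs_sum_le_sum_abs _ _
    have h2 : ∀ j : Fin m, |2 * D j t * D' j t| ≤ 2 * C * ψ t := by
      intro j
      have := hDle j t
      have hb := hbnd j t ht
      have hs : Real.sqrt (ψ t) * Real.sqrt (ψ t) = ψ t := Real.mul_self_sqrt (hψnonneg t)
      calc |2 * D j t * D' j t| = 2 * (|D j t| * |D' j t|) := by
            rw [abs_mul, abs_mul]; simp [abs_of_nonneg, mul_assoc]
        _ ≤ 2 * (Real.sqrt (ψ t) * (C * Real.sqrt (ψ t))) := by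
            apply mul_le_mul_of_nonneg_left _ (by norm_num)
            exact mul_le_mul this hb (abs_nonneg _) (Real.sqrt_nonneg _)
        _ = 2 * C * (Real.sqrt (ψ t) * Real.sqrt (ψ t)) := by ring
        _ = 2 * C * ψ t := by rw [hs]
    calc |ψ' t| ≤ ∑ _j : Fin m, 2 * C * ψ t := le_trans h1 (Finset.sum_le_sum fun j _ => h2 j)
      _ = (2 * m * C) * ψ t := by simp [Finset.sum_const, Finset.card_univ]; ring
      _ ≤ (2 * m * C) * |ψ t| := by
          apply mul_le_mul_of_nonneg_left (le_abs_self _)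
          positivity
  -- apply Grönwall
  have key := norm_le_gronwallBound_of_norm_deriv_right_le (f := ψ) (f' := ψ')
      (δ := ψ α) (K := 2 * m * C) (ε := 0) (a := α) (b := β) hcont
      (fun x hx => (hderψ x (Ico_subset_Icc_self hx)).mono_of_mem_nhdsWithin
        (Filter.mem_of_superset (Icc_mem_nhdsGE_of_mem ⟨le_refl x, hx.2⟩)
          (Icc_subset_Icc hx.1 le_rfl)))
      (by rw [Real.norm_eq_abs, abs_of_nonneg (hψnonneg α)])
      (fun x hx => by
        rw [Real.norm_eq_abs, Real.norm_eq_abs]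
        simpa using hbndψ x (Ico_subset_Icc_self hx))
  intro t ht
  have := key t ht
  rw [Real.norm_eq_abs, abs_of_nonneg (hψnonneg t), gronwallBound_ε0] at this
  exact this



/-- Two-sided Grönwall estimate: comparison from an interior time `t₀`. -/
lemma psi_gronwall {α β : ℝ} {m : ℕ} (D D' : Fin m → ℝ → ℝ) (C : ℝ) (hC : 0 ≤ C)
    (hder : ∀ i, ∀ t ∈ Icc α β, HasDerivWithinAt (D i) (D' i t) (Icc α β) t)
    (hbnd : ∀ i, ∀ t ∈ Icc α β,
      |D' i t| ≤ C * Real.sqrt (∑ j, (D j t) ^ 2))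
    {t₀ t : ℝ} (ht₀ : t₀ ∈ Icc α β) (ht : t ∈ Icc α β) :
    (∑ j, (D j t) ^ 2) ≤ (∑ j, (D j t₀) ^ 2) * Real.exp ((2 * m * C) * |t - t₀|) := by
  rcases le_total t₀ t with h | h
  · have hsub : Icc t₀ β ⊆ Icc α β := Icc_subset_Icc ht₀.1 le_rfl
    have := psi_gronwall_fwd (α := t₀) (β := β) D D' C hC
      (fun i u hu => (hder i u (hsub hu)).mono hsub)
      (fun i u hu => hbnd i u (hsub hu)) t ⟨h, ht.2⟩
    rwa [abs_of_nonneg (by linarith)]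
  · -- reflect time: σ u = t + t₀ - u maps [t, t₀] to itself
    set σ : ℝ → ℝ := fun u => t + t₀ - u with hσ
    have hσmem : ∀ u ∈ Icc t t₀, σ u ∈ Icc t t₀ := by
      intro u hu; constructor <;> simp [hσ] <;> linarith [hu.1, hu.2]
    have hsub : Icc t t₀ ⊆ Icc α β := Icc_subset_Icc ht.1 ht₀.2
    have hσder : ∀ u, HasDerivWithinAt σ (-1) (Icc t t₀) u := by
      intro u
      have h1 : HasDerivAt (fun u : ℝ => t + t₀ - u) (-1) u := by
        simpa using (hasDerivAt_id u).const_sub (t + t₀)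
      exact h1.hasDerivWithinAt
    have key := psi_gronwall_fwd (α := t) (β := t₀) (fun i => D i ∘ σ)
      (fun i u => -(D' i (σ u))) C hC
      (fun i u hu => by
        have h1 := ((hder i (σ u) (hsub (hσmem u hu))).mono hsub).comp u (hσder u)
          (fun x hx => hσmem x hx)
        simpa [mul_comm] using h1)
      (fun i u hu => by
        have := hbnd i (σ u) (hsub (hσmem u hu))
        simpa [Function.comp] using this)
      t₀ ⟨h, le_rfl⟩
    have hσt₀ : σ t₀ = t := by simp [hσ]
    have hσt : σ t = t₀ := by simp [hσ]
    simp only [Function.comp] at key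
    rw [hσt₀, hσt] at key
    have : |t - t₀| = t₀ - t := by rw [abs_of_nonpos (by linarith)]; ring
    rw [this]
    exact key



/-- Differentiation of `t ↦ ∫_a^t H(t,r) dr` (Leibniz rule with moving endpoint). -/
lemma hasDeriv_param_integral {a b : ℝ} (H H₁ : ℝ → ℝ → ℝ)
    (hH : ContinuousOn (fun p : ℝ × ℝ => H p.1 p.2) (Icc a b ×ˢ Icc a b))
    (hH₁ : ContinuousOn (fun p : ℝ × ℝ => H₁ p.1 p.2) (Icc a b ×ˢ Icc a b))
    (hder : ∀ r ∈ Icc a b, ∀ x ∈ Icc a b,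
      HasDerivWithinAt (fun u => H u r) (H₁ x r) (Icc a b) x)
    {s : ℝ} (hs : s ∈ Icc a b) :
    HasDerivWithinAt (fun t => ∫ r in a..t, H t r)
      (H s s + ∫ r in a..s, H₁ s r) (Icc a b) s := by
  have hab : a ≤ b := le_trans hs.1 hs.2
  have haI : a ∈ Icc a b := ⟨le_rfl, hab⟩
  have hslice : ∀ t ∈ Icc a b, ContinuousOn (fun r => H t r) (Icc a b) := by
    intro t ht
    exact hH.comp ((Continuous.prodMk_right t).continuousOn) (fun r hr => mk_mem_prod ht hr)
  have hslice₁ : ∀ t ∈ Icc a b, ContinuousOn (fun r => H₁ t r) (Icc a b) := by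
    intro t ht
    exact hH₁.comp ((Continuous.prodMk_right t).continuousOn) (fun r hr => mk_mem_prod ht hr)
  have hint : ∀ t ∈ Icc a b, ∀ x ∈ Icc a b, ∀ y ∈ Icc a b,
      IntervalIntegrable (fun r => H t r) volume x y := fun t ht x hx y hy =>
    ((hslice t ht).mono (uIcc_subset_Icc hx hy)).intervalIntegrable
  have hint₁ : ∀ t ∈ Icc a b, ∀ x ∈ Icc a b, ∀ y ∈ Icc a b,
      IntervalIntegrable (fun r => H₁ t r) volume x y := fun t ht x hx y hy =>
    ((hslice₁ t ht).mono (uIcc_subset_Icc hx hy)).intervalIntegrable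
  have habs : ∀ {x y u : ℝ}, u ∈ uIcc x y → |u - x| ≤ |y - x| := by
    intro x y u hu
    rcases le_total x y with h | h
    · rw [uIcc_of_le h] at hu
      rw [abs_of_nonneg (by linarith [hu.1]), abs_of_nonneg (by linarith)]
      linarith [hu.2]
    · rw [uIcc_of_ge h] at hu
      rw [abs_of_nonpos (by linarith [hu.2]), abs_of_nonpos (by linarith)]
      linarith [hu.1]
  rw [hasDerivWithinAt_iff_isLittleO, Asymptotics.isLittleO_iff]
  intro c hc
  set ε : ℝ := c / (2 + (b - a)) with hε
  have hεpos : 0 < ε := by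
    apply div_pos hc; linarith
  have hQ : IsCompact (Icc a b ×ˢ Icc a b) := isCompact_Icc.prod isCompact_Icc
  obtain ⟨δ₁, hδ₁pos, hδ₁⟩ := Metric.uniformContinuousOn_iff.1
    (hQ.uniformContinuousOn_of_continuous hH) ε hεpos
  obtain ⟨δ₂, hδ₂pos, hδ₂⟩ := Metric.uniformContinuousOn_iff.1
    (hQ.uniformContinuousOn_of_continuous hH₁) ε hεpos
  set δ : ℝ := min δ₁ δ₂ with hδdef
  have hδpos : 0 < δ := lt_min hδ₁pos hδ₂pos
  filter_upwards [self_mem_nhdsWithin,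
    mem_nhdsWithin_of_mem_nhds (Metric.ball_mem_nhds s hδpos)] with t htI htb
  have htd : |t - s| < δ := by rwa [Metric.mem_ball, Real.dist_eq] at htb
  have huIcc : uIcc s t ⊆ Icc a b := uIcc_subset_Icc hs htI
  -- term B integrand bound
  have hBbnd : ∀ r ∈ Set.uIoc s t, ‖H t r - H s s‖ ≤ ε := by
    intro r hr
    have hrI : r ∈ Icc a b := huIcc (uIoc_subset_uIcc hr)
    have hd : dist (t, r) ((s, s) : ℝ × ℝ) < δ₁ := by
      rw [Prod.dist_eq]
      apply max_lt
      · rw [Real.dist_eq]; exact lt_of_lt_of_le htd (min_le_left _ _)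
      · rw [Real.dist_eq]
        calc |r - s| ≤ |t - s| := habs (uIoc_subset_uIcc hr)
          _ < δ₁ := lt_of_lt_of_le htd (min_le_left _ _)
    exact le_of_lt (hδ₁ (t, r) (mk_mem_prod htI hrI) (s, s) (mk_mem_prod hs hs) hd)
  -- term A integrand bound, via MVT along the first variable
  have hAbnd : ∀ r ∈ Set.uIoc a s, ‖H t r - H s r - (t - s) * H₁ s r‖ ≤ ε * |t - s| := by
    intro r hr
    have hrI : r ∈ Icc a b := (uIcc_subset_Icc haI hs) (uIoc_subset_uIcc hr)
    have hφder : ∀ u ∈ uIcc s t,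
        HasDerivWithinAt (fun u => H u r - u * H₁ s r) (H₁ u r - H₁ s r) (uIcc s t) u := by
      intro u hu
      simpa using (((hder r hrI u (huIcc hu)).mono huIcc).fun_sub
        (((hasDerivAt_id u).mul_const (H₁ s r)).hasDerivWithinAt))
    have hφbnd : ∀ u ∈ uIcc s t, ‖H₁ u r - H₁ s r‖ ≤ ε := by
      intro u hu
      have hd : dist (u, r) ((s, r) : ℝ × ℝ) < δ₂ := by
        rw [Prod.dist_eq]
        apply max_lt
        · rw [Real.dist_eq]
          calc |u - s| ≤ |t - s| := habs hu
            _ < δ₂ := lt_of_lt_of_le htd (min_le_right _ _)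
        · rw [Real.dist_eq]; simpa using lt_of_lt_of_le hδpos (le_refl δ) |>.trans_le (min_le_right _ _)
      exact le_of_lt (hδ₂ (u, r) (mk_mem_prod (huIcc hu) hrI) (s, r) (mk_mem_prod hs hrI) hd)
    have hconv : Convex ℝ (uIcc s t) := convex_uIcc s t
    have hmvt := hconv.norm_image_sub_le_of_norm_hasDerivWithin_le hφder hφbnd
      left_mem_uIcc right_mem_uIcc
    have heq : (H t r - t * H₁ s r) - (H s r - s * H₁ s r)
        = H t r - H s r - (t - s) * H₁ s r := by ring
    calc ‖H t r - H s r - (t - s) * H₁ s r‖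
        = ‖(fun u => H u r - u * H₁ s r) t - (fun u => H u r - u * H₁ s r) s‖ := by
          rw [← heq]
      _ ≤ ε * ‖t - s‖ := hmvt
      _ = ε * |t - s| := by rw [Real.norm_eq_abs]
  -- algebraic decomposition
  have hsplit : (∫ r in a..t, H t r) = (∫ r in a..s, H t r) + ∫ r in s..t, H t r :=
    (integral_add_adjacent_intervals (hint t htI a haI s hs) (hint t htI s hs t htI)).symm
  have hTA : (∫ r in a..s, (H t r - H s r - (t - s) * H₁ s r))
      = (∫ r in a..s, H t r) - (∫ r in a..s, H s r) - (t - s) * ∫ r in a..s, H₁ s r := by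
    rw [integral_sub ((hint t htI a haI s hs).sub (hint s hs a haI s hs))
      ((hint₁ s hs a haI s hs).const_mul _),
      integral_sub (hint t htI a haI s hs) (hint s hs a haI s hs),
      intervalIntegral.integral_const_mul]
  have hTB : (∫ r in s..t, (H t r - H s s))
      = (∫ r in s..t, H t r) - (t - s) * H s s := by
    rw [integral_sub (hint t htI s hs t htI) intervalIntegrable_const, intervalIntegral.integral_const,
      smul_eq_mul]
  have hdecomp : (∫ r in a..t, H t r) - (∫ r in a..s, H s r)
      - (t - s) • (H s s + ∫ r in a..s, H₁ s r)
      = (∫ r in a..s, (H t r - H s r - (t - s) * H₁ s r))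
        + ∫ r in s..t, (H t r - H s s) := by
    rw [hTA, hTB, hsplit, smul_eq_mul]; ring
  rw [hdecomp]
  have hA : ‖∫ r in a..s, (H t r - H s r - (t - s) * H₁ s r)‖
      ≤ (ε * |t - s|) * |s - a| := norm_integral_le_of_norm_le_const hAbnd
  have hB : ‖∫ r in s..t, (H t r - H s s)‖ ≤ ε * |t - s| :=
    le_trans (norm_integral_le_of_norm_le_const hBbnd) (by rw [mul_comm])
  have hsa : |s - a| ≤ b - a := by
    rw [abs_of_nonneg (by linarith [hs.1])]; linarith [hs.2]
  calc ‖(∫ r in a..s, (H t r - H s r - (t - s) * H₁ s r))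
        + ∫ r in s..t, (H t r - H s s)‖
      ≤ (ε * |t - s|) * |s - a| + ε * |t - s| :=
        le_trans (norm_add_le _ _) (add_le_add hA hB)
    _ ≤ (ε * |t - s|) * (b - a) + ε * |t - s| := by
        apply add_le_add_left
        exact mul_le_mul_of_nonneg_left hsa (by positivity)
    _ = ε * ((b - a) + 1) * |t - s| := by ring
    _ ≤ c * ‖t - s‖ := by
        rw [Real.norm_eq_abs]
        apply mul_le_mul_of_nonneg_right _ (abs_nonneg _)
        rw [hε, div_mul_eq_mul_div, div_le_iff₀ (by linarith)]
        nlinarith [le_of_lt hc]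



section kernel
variable {a b : ℝ} {n ℓ : ℕ} {κbar : ℝ → ℝ} {Kbar : ℝ → ℝ → ℝ}

/-- `j`-th derivative of the kernel in the first variable. -/
noncomputable def Kj (Kbar : ℝ → ℝ → ℝ) (j : ℕ) (s r : ℝ) : ℝ :=
  iteratedDeriv j (fun u => Kbar u r) s

lemma hKderiv (hKsmooth : ∀ t, ContDiff ℝ n (fun s => Kbar s t))
    (r : ℝ) (i : ℕ) (hi : i < n) (x : ℝ) :
    HasDerivAt (fun s => Kj Kbar i s r) (Kj Kbar (i + 1) x r) x := by
  have hdiff := (hKsmooth r).differentiable_iteratedDeriv i (by exact_mod_cast hi)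
  have h := (hdiff x).hasDerivAt
  simp only [Kj, iteratedDeriv_succ]
  exact h

/-- diagonal values of the kernel derivatives -/
lemma hKdiag (hKinit0 : ∀ t ∈ Icc a b, ∀ j, j + 2 ≤ n →
      iteratedDeriv j (fun u => Kbar u t) t = 0)
    (hKinit1 : ∀ t ∈ Icc a b, iteratedDeriv (n - 1) (fun u => Kbar u t) t = 1)
    {t : ℝ} (ht : t ∈ Icc a b) {i : ℕ} (hi : i < n) :
    Kj Kbar i t t = if i + 1 = n then 1 else 0 := by
  by_cases h : i + 1 = n
  · rw [if_pos h, Kj, show i = n - 1 by omega]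
    exact hKinit1 t ht
  · rw [if_neg h, Kj]
    exact hKinit0 t ht i (by omega)

lemma kernel_ode (hKode : ∀ t ∈ Icc a b, ∀ s ∈ Icc a b,
      iteratedDeriv n (fun u => Kbar u t) s
        + κbar s * iteratedDeriv ℓ (fun u => Kbar u t) s = 0)
    {r s : ℝ} (hr : r ∈ Icc a b) (hs : s ∈ Icc a b) :
    Kj Kbar n s r = -κbar s * Kj Kbar ℓ s r := by
  have := hKode r hr s hs
  rw [Kj, Kj]; linarith

/-- Joint continuity of the kernel derivatives on the square. -/
lemma kernel_joint_cont (hab : a ≤ b) (hℓn : ℓ < n)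
    (M : ℝ) (hM0 : 0 ≤ M) (hM : ∀ s ∈ Icc a b, |κbar s| ≤ M)
    (hKsmooth : ∀ t, ContDiff ℝ n (fun s => Kbar s t))
    (hKode : ∀ t ∈ Icc a b, ∀ s ∈ Icc a b,
      iteratedDeriv n (fun u => Kbar u t) s
        + κbar s * iteratedDeriv ℓ (fun u => Kbar u t) s = 0)
    (hKinit0 : ∀ t ∈ Icc a b, ∀ j, j + 2 ≤ n →
      iteratedDeriv j (fun u => Kbar u t) t = 0)
    (hKinit1 : ∀ t ∈ Icc a b, iteratedDeriv (n - 1) (fun u => Kbar u t) t = 1)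
    (j : ℕ) (hj : j < n) :
    ContinuousOn (fun p : ℝ × ℝ => Kj Kbar j p.1 p.2) (Icc a b ×ˢ Icc a b) := by
  set C : ℝ := max 1 M with hCdef
  have hC0 : (0:ℝ) ≤ C := le_trans zero_le_one (le_max_left _ _)
  have h1C : (1:ℝ) ≤ C := le_max_left _ _
  have hMC : M ≤ C := le_max_right _ _
  set X : ℝ := Real.exp ((2 * n * C) * (b - a)) with hXdef
  have hXpos : 0 < X := Real.exp_pos _
  have hcont1 : ∀ (i : ℕ), i < n → ∀ r : ℝ, Continuous (fun s => Kj Kbar i s r) := by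
    intro i hi r
    exact (hKsmooth r).continuous_iteratedDeriv i (by exact_mod_cast hi.le)
  -- the Grönwall comparison of two kernel columns
  have key : ∀ r ∈ Icc a b, ∀ r' ∈ Icc a b, ∀ s ∈ Icc a b, ∀ i : Fin n,
      (Kj Kbar i s r - Kj Kbar i s r') ^ 2 ≤
        (∑ i' : Fin n, (Kj Kbar i' r r - Kj Kbar i' r r') ^ 2) * X := by
    intro r hr r' hr' s hs i
    set D : Fin n → ℝ → ℝ := fun i s => Kj Kbar i s r - Kj Kbar i s r' with hD
    set D' : Fin n → ℝ → ℝ := fun i s =>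
      if h : (i : ℕ) + 1 < n then D ⟨(i : ℕ) + 1, h⟩ s
      else -κbar s * D ⟨ℓ, hℓn⟩ s with hD'
    have hder : ∀ i : Fin n, ∀ t ∈ Icc a b, HasDerivWithinAt (D i) (D' i t) (Icc a b) t := by
      intro i t ht
      by_cases h : (i : ℕ) + 1 < n
      · have := ((hKderiv hKsmooth r i i.2 t).sub (hKderiv hKsmooth r' i i.2 t)).hasDerivWithinAt
          (s := Icc a b)
        simp only [hD', dif_pos h]
        exact this
      · have hin : (i : ℕ) + 1 = n := by omega
        have h1 := ((hKderiv hKsmooth r i i.2 t).sub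
          (hKderiv hKsmooth r' i i.2 t)).hasDerivWithinAt (s := Icc a b)
        rw [hin] at h1
        rw [kernel_ode hKode hr ht, kernel_ode hKode hr' ht] at h1
        simp only [hD', dif_neg h]
        exact h1.congr_deriv (by ring : -κbar t * Kj Kbar ℓ t r - -κbar t * Kj Kbar ℓ t r' = -κbar t * (Kj Kbar ℓ t r - Kj Kbar ℓ t r'))
    have hDle : ∀ (i : Fin n) (t : ℝ), |D i t| ≤ Real.sqrt (∑ i' : Fin n, (D i' t) ^ 2) := by
      intro i t
      rw [← Real.sqrt_sq_eq_abs]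
      exact Real.sqrt_le_sqrt (Finset.single_le_sum (f := fun i' => (D i' t) ^ 2)
        (fun i' _ => sq_nonneg _) (Finset.mem_univ i))
    have hbnd : ∀ i : Fin n, ∀ t ∈ Icc a b,
        |D' i t| ≤ C * Real.sqrt (∑ i' : Fin n, (D i' t) ^ 2) := by
      intro i t ht
      by_cases h : (i : ℕ) + 1 < n
      · simp only [hD', dif_pos h]
        calc |D ⟨(i : ℕ) + 1, h⟩ t| ≤ Real.sqrt (∑ i' : Fin n, (D i' t) ^ 2) := hDle _ t
          _ ≤ C * Real.sqrt (∑ i' : Fin n, (D i' t) ^ 2) := by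
              nlinarith [Real.sqrt_nonneg (∑ i' : Fin n, (D i' t) ^ 2)]
      · simp only [hD', dif_neg h]
        rw [abs_mul, abs_neg]
        exact mul_le_mul (le_trans (hM t ht) hMC) (hDle _ t) (abs_nonneg _) hC0
    have hg := psi_gronwall D D' C hC0 hder hbnd hr hs
    have hsq : (D i s) ^ 2 ≤ ∑ i' : Fin n, (D i' s) ^ 2 :=
      Finset.single_le_sum (f := fun i' => (D i' s) ^ 2)
        (fun i' _ => sq_nonneg _) (Finset.mem_univ i)
    have hexp : Real.exp ((2 * n * C) * |s - r|) ≤ X := by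
      rw [hXdef]
      apply Real.exp_le_exp.2
      apply mul_le_mul_of_nonneg_left _ (by positivity)
      rw [abs_sub_le_iff]
      constructor <;> linarith [hs.1, hs.2, hr.1, hr.2]
    have hψ0 : 0 ≤ ∑ i' : Fin n, (D i' r) ^ 2 := Finset.sum_nonneg fun _ _ => sq_nonneg _
    calc (D i s) ^ 2 ≤ ∑ i' : Fin n, (D i' s) ^ 2 := hsq
      _ ≤ (∑ i' : Fin n, (D i' r) ^ 2) * Real.exp ((2 * n * C) * |s - r|) := hg
      _ ≤ (∑ i' : Fin n, (D i' r) ^ 2) * X := mul_le_mul_of_nonneg_left hexp hψ0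
  -- now the ε-δ argument
  rw [Metric.continuousOn_iff]
  rintro ⟨s₀, r₀⟩ hp ε hε
  rw [mem_prod] at hp
  obtain ⟨hs₀, hr₀⟩ := hp
  -- continuity in the first variable
  obtain ⟨δ₂, hδ₂pos, hδ₂⟩ := Metric.continuousAt_iff.1
    ((hcont1 j hj r₀).continuousAt (x := s₀)) (ε / 2) (by linarith)
  -- continuity of r ↦ ∑ (Kj i r r₀ - c i)²
  set c : ℕ → ℝ := fun i => if i + 1 = n then 1 else 0 with hcdef
  set G : ℝ → ℝ := fun r => ∑ i : Fin n, ((if (i : ℕ) + 1 = n then (1:ℝ) else 0) - Kj Kbar i r r₀) ^ 2 with hG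
  have hGcont : Continuous G := by
    apply continuous_finset_sum
    intro i _
    exact ((continuous_const.sub (hcont1 i i.2 r₀)).pow 2)
  have hG0 : G r₀ = 0 := by
    rw [hG]
    apply Finset.sum_eq_zero
    intro i _
    rw [hKdiag hKinit0 hKinit1 hr₀ i.2]
    simp
  set T : ℝ := (ε / 2) ^ 2 / X with hT
  have hTpos : 0 < T := by positivity
  obtain ⟨δ₁, hδ₁pos, hδ₁⟩ := Metric.continuousAt_iff.1 (hGcont.continuousAt (x := r₀)) T hTpos
  refine ⟨min δ₁ δ₂, lt_min hδ₁pos hδ₂pos, ?_⟩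
  rintro ⟨s, r⟩ hq hd
  rw [mem_prod] at hq
  obtain ⟨hsI, hrI⟩ := hq
  rw [Prod.dist_eq] at hd
  have hd1 : dist r r₀ < δ₁ := lt_of_le_of_lt (le_max_right _ _) (lt_of_lt_of_le hd (min_le_left _ _))
  have hd2 : dist s s₀ < δ₂ := lt_of_le_of_lt (le_max_left _ _) (lt_of_lt_of_le hd (min_le_right _ _))
  have hGr : G r < T := by
    have := hδ₁ hd1
    rw [Real.dist_eq, hG0] at this
    calc G r ≤ |G r - 0| := by rw [sub_zero]; exact le_abs_self _
      _ < T := this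
  -- first piece
  have h1 : |Kj Kbar j s r - Kj Kbar j s r₀| < ε / 2 := by
    have hk := key r hrI r₀ hr₀ s hsI ⟨j, hj⟩
    have hGeq : (∑ i' : Fin n, (Kj Kbar i' r r - Kj Kbar i' r r₀) ^ 2) = G r := by
      rw [hG]
      apply Finset.sum_congr rfl
      intro i _
      rw [hKdiag hKinit0 hKinit1 hrI i.2]
    rw [hGeq] at hk
    have hlt : (Kj Kbar j s r - Kj Kbar j s r₀) ^ 2 < (ε / 2) ^ 2 := by
      calc (Kj Kbar j s r - Kj Kbar j s r₀) ^ 2 ≤ G r * X := hk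
        _ < T * X := by
            apply mul_lt_mul_of_pos_right hGr hXpos
        _ = (ε / 2) ^ 2 := by rw [hT, div_mul_cancel₀ _ (ne_of_gt hXpos)]
    have hsq2 := Real.sqrt_lt_sqrt (sq_nonneg _) hlt
    rwa [Real.sqrt_sq_eq_abs, Real.sqrt_sq (by linarith : (0:ℝ) ≤ ε / 2)] at hsq2
  have h2 : |Kj Kbar j s r₀ - Kj Kbar j s₀ r₀| < ε / 2 := by
    have := hδ₂ hd2
    rwa [Real.dist_eq] at this
  rw [Real.dist_eq]
  calc |Kj Kbar j s r - Kj Kbar j s₀ r₀|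
      ≤ |Kj Kbar j s r - Kj Kbar j s r₀| + |Kj Kbar j s r₀ - Kj Kbar j s₀ r₀| := by
        have : Kj Kbar j s r - Kj Kbar j s₀ r₀
            = (Kj Kbar j s r - Kj Kbar j s r₀) + (Kj Kbar j s r₀ - Kj Kbar j s₀ r₀) := by ring
        rw [this]; exact abs_add_le _ _
    _ < ε / 2 + ε / 2 := add_lt_add h1 h2
    _ = ε := by ring
end kernel



lemma itDeriv_hasDerivAt {f : ℝ → ℝ} {n j : ℕ} (hf : ContDiff ℝ n f) (hj : j < n) (x : ℝ) :
    HasDerivAt (iteratedDeriv j f) (iteratedDeriv (j + 1) f x) x := by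
  have hdiff := hf.differentiable_iteratedDeriv j (by exact_mod_cast hj)
  have h := (hdiff x).hasDerivAt
  rw [iteratedDeriv_succ]
  exact h

/-- Main positivity lemma: a solution of `w⁽ⁿ⁾ + κ̄ w⁽ˡ⁾ = g ≥ 0` with zero
initial data at `a` is nonnegative on `[a,b]`, given forward positivity of the kernel. -/
lemma key_nonneg {a b : ℝ} (hab : a ≤ b) {n ℓ : ℕ} (hℓn : ℓ < n) {κbar : ℝ → ℝ}
    (hκbar : ContinuousOn κbar (Icc a b))
    {Kbar : ℝ → ℝ → ℝ}
    (hKsmooth : ∀ t, ContDiff ℝ n (fun s => Kbar s t))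
    (hKode : ∀ t ∈ Icc a b, ∀ s ∈ Icc a b,
      iteratedDeriv n (fun u => Kbar u t) s
        + κbar s * iteratedDeriv ℓ (fun u => Kbar u t) s = 0)
    (hKinit0 : ∀ t ∈ Icc a b, ∀ j, j + 2 ≤ n →
      iteratedDeriv j (fun u => Kbar u t) t = 0)
    (hKinit1 : ∀ t ∈ Icc a b, iteratedDeriv (n - 1) (fun u => Kbar u t) t = 1)
    (hKpos : ∀ t ∈ Icc a b, ∀ s ∈ Icc a b, t < s → 0 ≤ Kbar s t)
    (w g : ℝ → ℝ) (hw : ContDiff ℝ n w) (hg : ContinuousOn g (Icc a b))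
    (hgpos : ∀ s ∈ Icc a b, 0 ≤ g s)
    (hwode : ∀ s ∈ Icc a b, iteratedDeriv n w s + κbar s * iteratedDeriv ℓ w s = g s)
    (hwinit : ∀ j, j < n → iteratedDeriv j w a = 0) :
    ∀ s ∈ Icc a b, 0 ≤ w s := by
  have hn : 0 < n := lt_of_le_of_lt (Nat.zero_le ℓ) hℓn
  have haI : a ∈ Icc a b := ⟨le_rfl, hab⟩
  obtain ⟨M', hM'⟩ := isCompact_Icc.exists_bound_of_continuousOn hκbar
  set M : ℝ := max M' 0 with hMdef
  have hM0 : (0:ℝ) ≤ M := le_max_right _ _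
  have hM : ∀ s ∈ Icc a b, |κbar s| ≤ M := fun s hs =>
    le_trans (by simpa using hM' s hs) (le_max_left _ _)
  set C : ℝ := max 1 M with hCdef
  have hC0 : (0:ℝ) ≤ C := le_trans zero_le_one (le_max_left _ _)
  have h1C : (1:ℝ) ≤ C := le_max_left _ _
  have hMC : M ≤ C := le_max_right _ _
  have Kcont : ∀ j, j < n →
      ContinuousOn (fun p : ℝ × ℝ => Kj Kbar j p.1 p.2) (Icc a b ×ˢ Icc a b) :=
    fun j hj => kernel_joint_cont hab hℓn M hM0 hM hKsmooth hKode hKinit0 hKinit1 j hj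
  have hgsnd : ContinuousOn (fun p : ℝ × ℝ => g p.2) (Icc a b ×ˢ Icc a b) :=
    hg.comp continuous_snd.continuousOn (fun p hp => hp.2)
  set F : ℕ → ℝ → ℝ := fun j t => ∫ r in a..t, Kj Kbar j t r * g r with hF
  -- derivative of F j for j+1 < n
  have hFder : ∀ j, j + 1 < n → ∀ s ∈ Icc a b,
      HasDerivWithinAt (F j) (F (j + 1) s) (Icc a b) s := by
    intro j hj s hs
    have h := hasDeriv_param_integral (fun s r => Kj Kbar j s r * g r)
      (fun s r => Kj Kbar (j + 1) s r * g r)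
      ((Kcont j (by omega)).mul hgsnd) ((Kcont (j + 1) hj).mul hgsnd)
      (fun r hr x hx => ((itDeriv_hasDerivAt (hKsmooth r) (by omega) x).mul_const
        (g r)).hasDerivWithinAt) hs
    have hdiag : Kj Kbar j s s = 0 := by
      rw [hKdiag hKinit0 hKinit1 hs (by omega : j < n), if_neg (by omega)]
    beta_reduce at h
    rw [hdiag] at h
    simpa using h
  -- derivative of F (n-1)
  have hFdertop : ∀ s ∈ Icc a b,
      HasDerivWithinAt (F (n - 1)) (g s + -κbar s * F ℓ s) (Icc a b) s := by
    intro s hs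
    have hκfst : ContinuousOn (fun p : ℝ × ℝ => -κbar p.1) (Icc a b ×ˢ Icc a b) :=
      (hκbar.comp continuous_fst.continuousOn (fun p hp => hp.1)).neg
    have h := hasDeriv_param_integral (fun s r => Kj Kbar (n - 1) s r * g r)
      (fun s r => -κbar s * Kj Kbar ℓ s r * g r)
      ((Kcont (n - 1) (by omega)).mul hgsnd)
      ((hκfst.mul (Kcont ℓ hℓn)).mul hgsnd)
      (fun r hr x hx => by
        have h1 := ((itDeriv_hasDerivAt (hKsmooth r) (by omega : n - 1 < n) x).mul_const
          (g r)).hasDerivWithinAt (s := Icc a b)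
        rw [show n - 1 + 1 = n by omega] at h1
        have h2 : iteratedDeriv n (fun u => Kbar u r) x = -κbar x * Kj Kbar ℓ x r :=
          kernel_ode hKode hr hx
        rw [show (iteratedDeriv n (fun u => Kbar u r) x) = Kj Kbar n x r from rfl] at h1
        rw [kernel_ode hKode hr hx] at h1
        exact h1) hs
    have hdiag : Kj Kbar (n - 1) s s = 1 := by
      rw [hKdiag hKinit0 hKinit1 hs (by omega : n - 1 < n), if_pos (by omega)]
    beta_reduce at h
    rw [hdiag] at h
    have hivert : (∫ r in a..s, -κbar s * Kj Kbar ℓ s r * g r) = -κbar s * F ℓ s := by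
      rw [hF]
      rw [← intervalIntegral.integral_const_mul]
      congr 1
      ext r
      ring
    rw [hivert] at h
    simpa using h
  -- the trajectory of w
  set W : ℕ → ℝ → ℝ := fun j => iteratedDeriv j w with hW
  have hWder : ∀ j, j < n → ∀ x, HasDerivAt (W j) (W (j + 1) x) x :=
    fun j hj x => itDeriv_hasDerivAt hw hj x
  -- difference system
  set D : Fin n → ℝ → ℝ := fun i s => W i s - F i s with hD
  set D' : Fin n → ℝ → ℝ := fun i s =>
    if h : (i : ℕ) + 1 < n then D ⟨(i : ℕ) + 1, h⟩ s
    else -κbar s * D ⟨ℓ, hℓn⟩ s with hD'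
  have hder : ∀ i : Fin n, ∀ t ∈ Icc a b, HasDerivWithinAt (D i) (D' i t) (Icc a b) t := by
    intro i t ht
    by_cases h : (i : ℕ) + 1 < n
    · simp only [hD', dif_pos h]
      exact ((hWder i i.2 t).hasDerivWithinAt).sub (hFder i h t ht)
    · have hin : (i : ℕ) = n - 1 := by omega
      simp only [hD', dif_neg h]
      have hWtop : HasDerivWithinAt (W (i : ℕ)) (g t - κbar t * W ℓ t) (Icc a b) t := by
        have h1 := (hWder i i.2 t).hasDerivWithinAt (s := Icc a b)
        have h2 : W ((i : ℕ) + 1) t = g t - κbar t * W ℓ t := by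
          rw [hW, show (i : ℕ) + 1 = n by omega]
          have := hwode t ht
          simp only [hW]
          linarith
        rwa [h2] at h1
      have hFtop : HasDerivWithinAt (F (i : ℕ)) (g t + -κbar t * F ℓ t) (Icc a b) t := by
        rw [hin]; exact hFdertop t ht
      have := hWtop.sub hFtop
      simp only [hD]
      exact this.congr_deriv (by ring : g t - κbar t * W ℓ t - (g t + -κbar t * F ℓ t) = -κbar t * (W ℓ t - F ℓ t))
  have hDle : ∀ (i : Fin n) (t : ℝ), |D i t| ≤ Real.sqrt (∑ i' : Fin n, (D i' t) ^ 2) := by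
    intro i t
    rw [← Real.sqrt_sq_eq_abs]
    exact Real.sqrt_le_sqrt (Finset.single_le_sum (f := fun i' => (D i' t) ^ 2)
      (fun i' _ => sq_nonneg _) (Finset.mem_univ i))
  have hbnd : ∀ i : Fin n, ∀ t ∈ Icc a b,
      |D' i t| ≤ C * Real.sqrt (∑ i' : Fin n, (D i' t) ^ 2) := by
    intro i t ht
    by_cases h : (i : ℕ) + 1 < n
    · simp only [hD', dif_pos h]
      calc |D ⟨(i : ℕ) + 1, h⟩ t| ≤ Real.sqrt (∑ i' : Fin n, (D i' t) ^ 2) := hDle _ t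
        _ ≤ C * Real.sqrt (∑ i' : Fin n, (D i' t) ^ 2) := by
            nlinarith [Real.sqrt_nonneg (∑ i' : Fin n, (D i' t) ^ 2)]
    · simp only [hD', dif_neg h]
      rw [abs_mul, abs_neg]
      exact mul_le_mul (le_trans (hM t ht) hMC) (hDle _ t) (abs_nonneg _) hC0
  have hzero : ∀ i : Fin n, D i a = 0 := by
    intro i
    simp only [hD, hW, hF]
    rw [hwinit i i.2, intervalIntegral.integral_same]
    ring
  have hgron := psi_gronwall_fwd D D' C hC0 hder hbnd
  intro s hs
  have hψ := hgron s hs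
  have hψa : (∑ j : Fin n, (D j a) ^ 2) = 0 := by
    apply Finset.sum_eq_zero; intro i _; rw [hzero i]; ring
  rw [hψa, zero_mul] at hψ
  have hψ0 : (∑ j : Fin n, (D j s) ^ 2) = 0 :=
    le_antisymm hψ (Finset.sum_nonneg fun _ _ => sq_nonneg _)
  have hD0 : D ⟨0, hn⟩ s = 0 := by
    have := (Finset.sum_eq_zero_iff_of_nonneg (fun i _ => sq_nonneg (D i s))).1 hψ0
      ⟨0, hn⟩ (Finset.mem_univ _)
    exact pow_eq_zero_iff (by norm_num) |>.1 this
  have hwF : w s = F 0 s := by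
    have : W 0 s - F 0 s = 0 := hD0
    have hW0 : W 0 s = w s := by simp only [hW]; rw [iteratedDeriv_zero]
    linarith
  rw [hwF, hF]
  apply intervalIntegral.integral_nonneg hs.1
  intro u hu
  have huI : u ∈ Icc a b := ⟨hu.1, le_trans hu.2 hs.2⟩
  apply mul_nonneg _ (hgpos u huI)
  have hK0 : Kj Kbar 0 s u = Kbar s u := by rw [Kj, iteratedDeriv_zero]
  rw [hK0]
  rcases lt_or_eq_of_le hu.2 with h | h
  · exact hKpos u huI s hs h
  · subst h
    have := hKdiag hKinit0 hKinit1 hs hn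
    rw [Kj, iteratedDeriv_zero] at this
    rw [this]
    split <;> norm_num



lemma nonneg_of_ae_pos {a b : ℝ} (hab : a < b) {φ : ℝ → ℝ} (hφ : Continuous φ)
    (hae : ∀ᵐ s ∂(volume.restrict (Icc a b)), 0 < φ s) :
    ∀ s ∈ Icc a b, 0 ≤ φ s := by
  intro s₀ hs₀
  by_contra hneg
  push_neg at hneg
  have hopen : IsOpen {x | φ x < 0} := isOpen_lt hφ continuous_const
  obtain ⟨ε, hε, hball⟩ := Metric.isOpen_iff.1 hopen s₀ hneg
  set c : ℝ := max a (s₀ - ε / 2) with hc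
  set d : ℝ := min b (s₀ + ε / 2) with hd
  have hcd : c < d := by
    apply max_lt <;> apply lt_min
    · exact hab
    · linarith [hs₀.1]
    · linarith [hs₀.2]
    · linarith
  have hsub1 : Icc c d ⊆ Icc a b := Icc_subset_Icc (le_max_left _ _) (min_le_left _ _)
  have hsub2 : Icc c d ⊆ {x | φ x < 0} := by
    intro x hx
    apply hball
    rw [Metric.mem_ball, Real.dist_eq]
    have h1 := le_max_right a (s₀ - ε / 2)
    have h2 := min_le_right b (s₀ + ε / 2)
    rw [abs_lt]
    constructor <;> [linarith [hx.2, le_trans h1 hx.1]; linarith [hx.1, le_trans hx.2 h2]]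
  have hmeas : MeasurableSet {x | ¬ 0 < φ x} := by
    have : {x | ¬ 0 < φ x} = φ ⁻¹' (Iic 0) := by ext x; simp [not_lt]
    rw [this]
    exact measurableSet_Iic.preimage hφ.measurable
  have h0 : volume.restrict (Icc a b) {x | ¬ 0 < φ x} = 0 := ae_iff.1 hae
  rw [Measure.restrict_apply hmeas] at h0
  have hle : volume (Icc c d) ≤ volume ({x | ¬ 0 < φ x} ∩ Icc a b) := by
    apply measure_mono
    intro x hx
    exact ⟨by simp only [mem_setOf_eq, not_lt]; exact le_of_lt (hsub2 hx), hsub1 hx⟩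
  rw [h0] at hle
  have : volume (Icc c d) = 0 := le_antisymm hle zero_le
  rw [Real.volume_Icc] at this
  rw [ENNReal.ofReal_eq_zero] at this
  linarith

lemma iteratedDeriv_sub' {f g : ℝ → ℝ} {n j : ℕ} (hj : j ≤ n)
    (hf : ContDiff ℝ n f) (hg : ContDiff ℝ n g) (x : ℝ) :
    iteratedDeriv j (fun s => f s - g s) x = iteratedDeriv j f x - iteratedDeriv j g x := by
  have h1 := iteratedDerivWithin_sub (n := j) (mem_univ x) uniqueDiffOn_univ
    ((hf.of_le (by exact_mod_cast hj)).contDiffWithinAt (s := univ))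
    ((hg.of_le (by exact_mod_cast hj)).contDiffWithinAt (s := univ))
  simp only [iteratedDerivWithin_univ] at h1
  convert h1 using 2
  rfl
/-- comparison theorem for solutions of
`y⁽ⁿ⁾ + κ y⁽ˡ⁾ = f` and `ȳ⁽ⁿ⁾ + κ̄ ȳ⁽ˡ⁾ = f` with the same initial data at `a`,
assuming the Lagrange kernel of the barred operator is forward positive and
`y⁽ˡ⁾ > 0` a.e. on `[a,b]`. -/
theorem comparison_initial_value (a b : ℝ) (hab : a < b) (n ℓ : ℕ)
    (hℓn : ℓ < n) (κ κbar f : ℝ → ℝ)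
    (hκ : ContinuousOn κ (Set.Icc a b)) (hκbar : ContinuousOn κbar (Set.Icc a b))
    (hf : ContinuousOn f (Set.Icc a b))
    (y ybar : ℝ → ℝ) (hy : ContDiff ℝ n y) (hybar : ContDiff ℝ n ybar)
    (hyode : ∀ s ∈ Set.Icc a b,
      iteratedDeriv n y s + κ s * iteratedDeriv ℓ y s = f s)
    (hybarode : ∀ s ∈ Set.Icc a b,
      iteratedDeriv n ybar s + κbar s * iteratedDeriv ℓ ybar s = f s)
    (hinit : ∀ j < n, iteratedDeriv j y a = iteratedDeriv j ybar a)
    (Kbar : ℝ → ℝ → ℝ)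
    (hKsmooth : ∀ t, ContDiff ℝ n (fun s => Kbar s t))
    (hKode : ∀ t ∈ Set.Icc a b, ∀ s ∈ Set.Icc a b,
      iteratedDeriv n (fun u => Kbar u t) s
        + κbar s * iteratedDeriv ℓ (fun u => Kbar u t) s = 0)
    (hKinit0 : ∀ t ∈ Set.Icc a b, ∀ j, j + 2 ≤ n →
      iteratedDeriv j (fun u => Kbar u t) t = 0)
    (hKinit1 : ∀ t ∈ Set.Icc a b, iteratedDeriv (n - 1) (fun u => Kbar u t) t = 1)
    (hKpos : ∀ t ∈ Set.Icc a b, ∀ s ∈ Set.Icc a b, t < s → 0 ≤ Kbar s t)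
    (hypos : ∀ᵐ s ∂(volume.restrict (Set.Icc a b)), 0 < iteratedDeriv ℓ y s) :
    ((∀ s ∈ Set.Icc a b, κ s ≤ κbar s) → ∀ s ∈ Set.Icc a b, ybar s ≤ y s) ∧
    ((∀ s ∈ Set.Icc a b, κbar s ≤ κ s) → ∀ s ∈ Set.Icc a b, y s ≤ ybar s) := by
  have hab' : a ≤ b := le_of_lt hab
  have hycont : Continuous (iteratedDeriv ℓ y) :=
    hy.continuous_iteratedDeriv ℓ (by exact_mod_cast hℓn.le)
  have hyl : ∀ s ∈ Set.Icc a b, 0 ≤ iteratedDeriv ℓ y s :=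
    nonneg_of_ae_pos hab hycont hypos
  constructor
  · -- κ ≤ κ̄  ⇒  ȳ ≤ y
    intro hκle s hs
    have hkey := key_nonneg hab' hℓn hκbar hKsmooth hKode hKinit0 hKinit1 hKpos
      (fun s => y s - ybar s) (fun s => (κbar s - κ s) * iteratedDeriv ℓ y s)
      (hy.sub hybar)
      (((hκbar.sub hκ).mul hycont.continuousOn))
      (fun s hs => mul_nonneg (sub_nonneg.2 (hκle s hs)) (hyl s hs))
      (fun s hs => by
        rw [iteratedDeriv_sub' le_rfl hy hybar, iteratedDeriv_sub' hℓn.le hy hybar]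
        have h1 := hyode s hs
        have h2 := hybarode s hs
        beta_reduce
        linear_combination h1 - h2)
      (fun j hj => by
        rw [iteratedDeriv_sub' hj.le hy hybar, hinit j hj]; ring)
    have h := hkey s hs
    beta_reduce at h
    linarith
  · -- κ̄ ≤ κ  ⇒  y ≤ ȳ
    intro hκle s hs
    have hkey := key_nonneg hab' hℓn hκbar hKsmooth hKode hKinit0 hKinit1 hKpos
      (fun s => ybar s - y s) (fun s => (κ s - κbar s) * iteratedDeriv ℓ y s)
      (hybar.sub hy)
      (((hκ.sub hκbar).mul hycont.continuousOn))
      (fun s hs => mul_nonneg (sub_nonneg.2 (hκle s hs)) (hyl s hs))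
      (fun s hs => by
        rw [iteratedDeriv_sub' le_rfl hybar hy, iteratedDeriv_sub' hℓn.le hybar hy]
        have h1 := hyode s hs
        have h2 := hybarode s hs
        beta_reduce
        linear_combination h2 - h1)
      (fun j hj => by
        rw [iteratedDeriv_sub' hj.le hybar hy, hinit j hj]; ring)
    have h := hkey s hs
    beta_reduce at h
    linarith
end

section
/- Let κ : [a,b] → ℝ be continuous, let u ∈ C²([a,b]) satisfy u'' + κu = 0 with u(a) = 0 and u'(a) ≠ 0, and suppose κ(s) ≤ k₀ on [a,b] where k₀ ≤ (π/(b−a))². Then u has no zero in (a,b). -/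
open Set Filter

lemma sturm_key (a b c₀ k₀ : ℝ) (hac : a < c₀) (hcb : c₀ < b)
    (κ w : ℝ → ℝ) (hκ : ContinuousOn κ (Set.Icc a b)) (hw : ContDiff ℝ 2 w)
    (hode : ∀ s ∈ Set.Icc a b, deriv (deriv w) s = -(κ s * w s))
    (hwa : w a = 0) (hwc : w c₀ = 0)
    (hpos : ∀ s ∈ Set.Ioo a c₀, 0 < w s)
    (hκk₀ : ∀ s ∈ Set.Icc a b, κ s ≤ k₀)
    (hk₀pos : 0 < k₀) (hk₀ : k₀ ≤ (Real.pi / (b - a)) ^ 2) :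
    deriv w a = 0 := by
  have hab : a < b := hac.trans hcb
  rw [show ((2:WithTop ℕ∞)) = 1 + 1 by norm_num, contDiff_succ_iff_deriv] at hw
  obtain ⟨hwdiff, -, hdw⟩ := hw
  set d := deriv w with hd
  have hddiff : Differentiable ℝ d := hdw.differentiable one_ne_zero
  have hwd : ∀ s, HasDerivAt w (d s) s := fun s => (hwdiff s).hasDerivAt
  have hdd : ∀ s, HasDerivAt d (deriv d s) s := fun s => (hddiff s).hasDerivAt
  set ω := Real.sqrt k₀ with hω
  have hωpos : 0 < ω := Real.sqrt_pos.2 hk₀pos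
  have hω2 : ω ^ 2 = k₀ := Real.sq_sqrt hk₀pos.le
  have hπpos := Real.pi_pos
  have hωb : ω * (b - a) ≤ Real.pi := by
    have h1 : ω ≤ Real.pi / (b - a) := by
      have h2 := Real.sqrt_le_sqrt hk₀
      rwa [Real.sqrt_sq (le_of_lt (div_pos hπpos (by linarith)))] at h2
    have h3 : ω * (b - a) ≤ (Real.pi / (b - a)) * (b - a) :=
      mul_le_mul_of_nonneg_right h1 (by linarith)
    calc ω * (b - a) ≤ (Real.pi / (b - a)) * (b - a) := h3
      _ = Real.pi := by rw [div_mul_cancel₀ _ (by linarith : b - a ≠ 0)]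
  set v := fun s => Real.sin (ω * (s - a)) with hv
  have hlin : ∀ s : ℝ, HasDerivAt (fun s : ℝ => ω * (s - a)) ω s := by
    intro s
    simpa using ((hasDerivAt_id s).sub_const a).const_mul ω
  have hvd : ∀ s, HasDerivAt v (ω * Real.cos (ω * (s - a))) s := by
    intro s
    refine ((Real.hasDerivAt_sin (ω * (s - a))).comp s (hlin s)).congr_deriv ?_
    ring
  have hvd' : ∀ s, HasDerivAt (fun s => ω * Real.cos (ω * (s - a))) (-(k₀ * v s)) s := by
    intro s
    have h2 := ((Real.hasDerivAt_cos (ω * (s - a))).comp s (hlin s)).const_mul ω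
    refine h2.congr_deriv ?_
    rw [← hω2]; simp [hv]; ring
  have hvpos : ∀ s, a < s → s < b → 0 < v s := by
    intro s h1 h2
    apply Real.sin_pos_of_pos_of_lt_pi (mul_pos hωpos (by linarith))
    calc ω * (s - a) < ω * (b - a) := by
          exact mul_lt_mul_of_pos_left (by linarith) hωpos
      _ ≤ Real.pi := hωb
  set W := fun s => d s * v s - w s * (ω * Real.cos (ω * (s - a))) with hW
  have hWd : ∀ s ∈ Set.Icc a b, HasDerivAt W ((k₀ - κ s) * (w s * v s)) s := by
    intro s hs
    have h := ((hdd s).mul (hvd s)).sub ((hwd s).mul (hvd' s))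
    refine h.congr_deriv ?_
    rw [hode s hs]; ring
  have hWdiff : Differentiable ℝ W := fun s =>
    (((hdd s).mul (hvd s)).sub ((hwd s).mul (hvd' s))).differentiableAt
  have hWmono : MonotoneOn W (Set.Icc a c₀) := by
    apply monotoneOn_of_deriv_nonneg (convex_Icc a c₀) hWdiff.continuous.continuousOn
      (hWdiff.differentiableOn)
    intro x hx
    rw [interior_Icc] at hx
    have hx' : x ∈ Set.Icc a b := ⟨hx.1.le, (hx.2.trans hcb).le⟩
    rw [(hWd x hx').deriv]
    have h1 := hκk₀ x hx'
    have h2 := hpos x hx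
    have h3 := hvpos x hx.1 (hx.2.trans hcb)
    have := mul_pos h2 h3
    nlinarith
  have hWa : W a = 0 := by simp [hW, hv, hwa, sub_self]
  have h0le : 0 ≤ W c₀ := by
    have := hWmono (⟨le_rfl, hac.le⟩ : a ∈ Set.Icc a c₀) ⟨hac.le, le_rfl⟩ hac.le
    rwa [hWa] at this
  have hvc := hvpos c₀ hac hcb
  have hdc0 : 0 ≤ d c₀ := by
    have hWc : W c₀ = d c₀ * v c₀ := by simp [hW, hwc]
    nlinarith [hWc ▸ h0le]
  have hdc1 : d c₀ ≤ 0 := by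
    have ht : Filter.Tendsto (slope w c₀) (nhdsWithin c₀ (Set.Iio c₀)) (nhds (d c₀)) :=
      (hasDerivAt_iff_tendsto_slope.1 (hwd c₀)).mono_left
        (nhdsWithin_mono _ (fun y hy => ne_of_lt hy))
    apply le_of_tendsto ht
    filter_upwards [Ioo_mem_nhdsLT_of_mem (⟨hac, le_rfl⟩ : c₀ ∈ Set.Ioc a c₀)] with y hy
    rw [slope_def_field, hwc]
    have := hpos y hy
    have : w y / (y - c₀) ≤ 0 :=
      div_nonpos_of_nonneg_of_nonpos this.le (by linarith [hy.2])
    simpa using this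
  have hdc : d c₀ = 0 := le_antisymm hdc1 hdc0
  -- Gronwall step
  obtain ⟨K₀, hK₀⟩ := (isCompact_Icc).exists_bound_of_continuousOn hκ
  set K := max K₀ 1 with hK
  have hK1 : (1:ℝ) ≤ K := le_max_right _ _
  have hKb : ∀ s ∈ Set.Icc a b, |κ s| ≤ K := fun s hs => (hK₀ s hs).trans (le_max_left _ _)
  set F := fun s => (d s ^ 2 + K * w s ^ 2) * Real.exp (2 * K * s) with hF
  have hexp : ∀ s : ℝ, HasDerivAt (fun s => Real.exp (2 * K * s)) (2 * K * Real.exp (2 * K * s)) s := by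
    intro s
    have h1 : HasDerivAt (fun s : ℝ => 2 * K * s) (2 * K) s := by
      simpa using (hasDerivAt_id s).const_mul (2 * K)
    simpa [mul_comm] using h1.exp
  have hFd : ∀ s, HasDerivAt F
      ((2 * d s * deriv d s + K * (2 * w s * d s)) * Real.exp (2 * K * s)
        + (d s ^ 2 + K * w s ^ 2) * (2 * K * Real.exp (2 * K * s))) s := by
    intro s
    have h1 : HasDerivAt (fun s => d s ^ 2) (2 * d s * deriv d s) s := by
      exact ((hdd s).pow 2).congr_deriv (by norm_num)
    have h2 : HasDerivAt (fun s => K * w s ^ 2) (K * (2 * w s * d s)) s := by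
      have := (hwd s).pow 2
      simpa using this.const_mul K
    exact ((h1.add h2).mul (hexp s))
  have hFmono : MonotoneOn F (Set.Icc a c₀) := by
    have hFdiff : Differentiable ℝ F := fun s => (hFd s).differentiableAt
    apply monotoneOn_of_deriv_nonneg (convex_Icc a c₀) hFdiff.continuous.continuousOn
      hFdiff.differentiableOn
    intro x hx
    rw [interior_Icc] at hx
    have hx' : x ∈ Set.Icc a b := ⟨hx.1.le, (hx.2.trans hcb).le⟩
    rw [(hFd x).deriv, hode x hx']
    have hκx := abs_le.1 (hKb x hx')
    have hepos := Real.exp_pos (2 * K * x)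
    have hinner : 0 ≤ 2 * d x * (-(κ x * w x)) + K * (2 * w x * d x) + (d x ^ 2 + K * w x ^ 2) * (2 * K) := by
      have e1 : (0:ℝ) ≤ (K - κ x) * (d x + w x) ^ 2 :=
        mul_nonneg (by linarith) (sq_nonneg _)
      have e2 : (0:ℝ) ≤ (K + κ x) * (d x) ^ 2 := mul_nonneg (by linarith) (sq_nonneg _)
      have e3 : (0:ℝ) ≤ (K + κ x) * (w x) ^ 2 := mul_nonneg (by linarith) (sq_nonneg _)
      have e4 : (0:ℝ) ≤ (K ^ 2 - K) * (w x) ^ 2 :=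
        mul_nonneg (by nlinarith) (sq_nonneg _)
      linarith [e1, e2, e3, e4]
    have heq : (2 * d x * (-(κ x * w x)) + K * (2 * w x * d x)) * Real.exp (2 * K * x)
        + (d x ^ 2 + K * w x ^ 2) * (2 * K * Real.exp (2 * K * x))
        = (2 * d x * (-(κ x * w x)) + K * (2 * w x * d x) + (d x ^ 2 + K * w x ^ 2) * (2 * K)) * Real.exp (2 * K * x) := by
      ring
    rw [heq]
    exact mul_nonneg hinner hepos.le
  have hle : F a ≤ F c₀ := hFmono ⟨le_rfl, hac.le⟩ ⟨hac.le, le_rfl⟩ hac.le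
  have hFc : F c₀ = 0 := by simp [hF, hwc, hdc]
  have hFa : F a = d a ^ 2 * Real.exp (2 * K * a) := by simp [hF, hwa]
  have hsq : d a ^ 2 ≤ 0 := by
    rw [hFa, hFc] at hle
    have hE := Real.exp_pos (2 * K * a)
    have h0 : d a ^ 2 * Real.exp (2 * K * a) ≤ 0 * Real.exp (2 * K * a) := by
      rw [zero_mul]; exact hle
    exact le_of_mul_le_mul_right h0 hE
  have h2 : d a ^ 2 = 0 := le_antisymm hsq (sq_nonneg _)
  exact pow_eq_zero_iff (by norm_num) |>.1 h2

/-- Sturm-type nonoscillation, Dirichlet data: if `u'' + κu = 0`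
on `[a,b]` with `u(a) = 0`, `u'(a) ≠ 0`, and `κ ≤ k₀ ≤ (π/(b−a))²`, then `u`
has no zero in `(a,b)`. -/
theorem sturm_nonoscillation_dirichlet (a b k₀ : ℝ) (hab : a < b)
    (κ u : ℝ → ℝ) (hκ : ContinuousOn κ (Set.Icc a b)) (hu : ContDiff ℝ 2 u)
    (hode : ∀ s ∈ Set.Icc a b, iteratedDeriv 2 u s + κ s * u s = 0)
    (hua : u a = 0) (hua' : deriv u a ≠ 0)
    (hκk₀ : ∀ s ∈ Set.Icc a b, κ s ≤ k₀)
    (hk₀ : k₀ ≤ (Real.pi / (b - a)) ^ 2) :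
    ∀ s ∈ Set.Ioo a b, u s ≠ 0 := by
  intro c hc hzero
  have hudiff : Differentiable ℝ u := hu.differentiable (by norm_num)
  have hucont : Continuous u := hudiff.continuous
  have hode2 : ∀ s ∈ Set.Icc a b, deriv (deriv u) s = -(κ s * u s) := by
    intro s hs
    have h := hode s hs
    rw [iteratedDeriv_succ, iteratedDeriv_one] at h
    linarith
  set k₁ := max k₀ ((Real.pi / (b - a)) ^ 2 / 2) with hk₁def
  have hπ := Real.pi_pos
  have hba : (0:ℝ) < b - a := by linarith
  have hhalfpos : 0 < (Real.pi / (b - a)) ^ 2 / 2 := by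
    have h1 : 0 < Real.pi / (b - a) := div_pos hπ hba
    positivity
  have hk₁pos : 0 < k₁ := lt_of_lt_of_le hhalfpos (le_max_right _ _)
  have hk₁le : k₁ ≤ (Real.pi / (b - a)) ^ 2 := max_le hk₀ (by linarith)
  have hκk₁ : ∀ s ∈ Set.Icc a b, κ s ≤ k₁ := fun s hs => (hκk₀ s hs).trans (le_max_left _ _)
  -- u is nonzero slightly to the right of a
  have hda : HasDerivAt u (deriv u a) a := (hudiff a).hasDerivAt
  have hslope := hasDerivAt_iff_tendsto_slope.1 hda
  have hne : ∀ᶠ y in nhdsWithin a (Set.Ioi a), u y ≠ 0 := by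
    have h1 : ∀ᶠ y in nhdsWithin a {a}ᶜ, slope u a y ≠ 0 := hslope.eventually_ne hua'
    have h2 := h1.filter_mono (nhdsWithin_mono a (fun y (hy : y ∈ Set.Ioi a) => ne_of_gt hy))
    filter_upwards [h2] with y hy h0
    apply hy
    simp [slope_def_field, h0, hua]
  obtain ⟨e, he, hesub⟩ := mem_nhdsGT_iff_exists_Ioo_subset.1 hne
  -- the first zero c₀ to the right of a
  set T := Set.Icc (min e c) b ∩ u ⁻¹' {0} with hT
  have hTclosed : IsClosed T := (isClosed_Icc).inter (isClosed_singleton.preimage hucont)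
  have hcT : c ∈ T := ⟨⟨min_le_right _ _, hc.2.le⟩, hzero⟩
  have hTne : T.Nonempty := ⟨c, hcT⟩
  have hTbdd : BddBelow T := ⟨min e c, fun x hx => hx.1.1⟩
  set c₀ := sInf T with hc₀def
  have hc₀T : c₀ ∈ T := hTclosed.csInf_mem hTne hTbdd
  have hac₀ : a < c₀ := lt_of_lt_of_le (lt_min he hc.1) hc₀T.1.1
  have hc₀c : c₀ ≤ c := csInf_le hTbdd hcT
  have hc₀b : c₀ < b := lt_of_le_of_lt hc₀c hc.2
  have huc₀ : u c₀ = 0 := hc₀T.2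
  have hnz : ∀ s ∈ Set.Ioo a c₀, u s ≠ 0 := by
    intro s hs h0
    rcases lt_or_ge s (min e c) with h | h
    · exact hesub ⟨hs.1, lt_of_lt_of_le h (min_le_left _ _)⟩ h0
    · have hsT : s ∈ T := ⟨⟨h, (hs.2.trans hc₀b).le⟩, h0⟩
      exact absurd (csInf_le hTbdd hsT) (not_le.2 hs.2)
  -- constant sign on (a, c₀)
  have hmid : (a + c₀) / 2 ∈ Set.Ioo a c₀ := ⟨by linarith, by linarith⟩
  have hsign : (∀ s ∈ Set.Ioo a c₀, 0 < u s) ∨ (∀ s ∈ Set.Ioo a c₀, u s < 0) := by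
    have hIVT : ∀ s ∈ Set.Ioo a c₀, ∀ t ∈ Set.Ioo a c₀, u s < 0 → 0 < u t → False := by
      intro s hs t ht h1 h2
      have hsub : Set.uIcc s t ⊆ Set.Ioo a c₀ :=
        Set.OrdConnected.uIcc_subset Set.ordConnected_Ioo hs ht
      have h0 : (0:ℝ) ∈ Set.uIcc (u s) (u t) := Set.mem_uIcc.2 (Or.inl ⟨h1.le, h2.le⟩)
      obtain ⟨z, hz, hz0⟩ := intermediate_value_uIcc hucont.continuousOn h0
      exact hnz z (hsub hz) hz0
    rcases (hnz _ hmid).lt_or_gt with h | h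
    · right
      intro s hs
      rcases (hnz s hs).lt_or_gt with h' | h'
      · exact h'
      · exact absurd (hIVT _ hmid s hs h h') (fun x => x)
    · left
      intro s hs
      rcases (hnz s hs).lt_or_gt with h' | h'
      · exact absurd (hIVT s hs _ hmid h' h) (fun x => x)
      · exact h'
  rcases hsign with hp | hn
  · exact hua' (sturm_key a b c₀ k₁ hac₀ hc₀b κ u hκ hu hode2 hua huc₀ hp hκk₁ hk₁pos hk₁le)
  · have hodeneg : ∀ s ∈ Set.Icc a b, deriv (deriv (fun s => -u s)) s = -(κ s * (fun s => -u s) s) := by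
      intro s hs
      have hfun : deriv (fun s => -u s) = fun s => -(deriv u s) := funext fun x => deriv.neg
      rw [hfun]
      simp only []
      rw [show (deriv (fun s => -(deriv u s)) s) = -(deriv (deriv u) s) from deriv.neg,
        hode2 s hs]
      ring
    have hkey := sturm_key a b c₀ k₁ hac₀ hc₀b κ (fun s => -u s) hκ hu.neg hodeneg
      (by simp [hua]) (by simp [huc₀]) (fun s hs => by simpa using hn s hs) hκk₁ hk₁pos hk₁le
    rw [show (deriv (fun s => -u s) a) = -(deriv u a) from deriv.neg] at hkey
    exact hua' (by linarith)
end

section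
/- Let u ∈ C²([a,b]) satisfy u'' + κu = 0 with u(a) ≠ 0 and u'(a) = 0, where κ : [a,b] → ℝ is continuous and κ(s) ≤ k₀ with k₀ ≤ (π/(2(b−a)))². Then u(s) ≠ 0 for all s ∈ (a,b). -/
open Real Set

/-- Main comparison argument, for the case `u a > 0`. -/
lemma sturm_aux (a b k₀ : ℝ) (hab : a < b)
    (κ u : ℝ → ℝ) (hu : ContDiff ℝ 2 u)
    (hode : ∀ s ∈ Set.Icc a b, iteratedDeriv 2 u s + κ s * u s = 0)
    (hua : 0 < u a) (hua' : deriv u a = 0)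
    (hκk₀ : ∀ s ∈ Set.Icc a b, κ s ≤ k₀)
    (hk₀ : k₀ ≤ (Real.pi / (2 * (b - a))) ^ 2) :
    ∀ s ∈ Set.Ioo a b, u s ≠ 0 := by
  intro s₀ hs₀ huz
  have hba : (0:ℝ) < b - a := by linarith [hs₀.1, hs₀.2]
  set ω : ℝ := Real.pi / (2 * (b - a)) with hω
  have hωpos : 0 < ω := div_pos Real.pi_pos (by linarith)
  have hωba : ω * (b - a) = Real.pi / 2 := by
    rw [hω, div_mul_eq_mul_div, div_eq_div_iff (ne_of_gt (by linarith)) (by norm_num)]; ring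
  have hucont : Continuous u := hu.continuous
  -- first zero
  set S : Set ℝ := {s | s ∈ Set.Icc a s₀ ∧ u s = 0} with hS
  have hSne : S.Nonempty := ⟨s₀, ⟨le_of_lt hs₀.1, le_refl _⟩, huz⟩
  have hSbdd : BddBelow S := ⟨a, fun x hx => hx.1.1⟩
  have hSclosed : IsClosed S := by
    have : S = Set.Icc a s₀ ∩ u ⁻¹' {0} := by
      ext x
      simp only [hS, Set.mem_setOf_eq, Set.mem_inter_iff, Set.mem_preimage,
        Set.mem_singleton_iff]
    rw [this]
    exact isClosed_Icc.inter (isClosed_singleton.preimage hucont)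
  set c : ℝ := sInf S with hc
  have hcS : c ∈ S := hSclosed.csInf_mem hSne hSbdd
  have hcIcc : c ∈ Set.Icc a s₀ := hcS.1
  have hucz : u c = 0 := hcS.2
  have hac : a < c := lt_of_le_of_ne hcIcc.1 (by
    intro h; rw [← h] at hucz; exact (ne_of_gt hua) hucz)
  have hcb : c < b := lt_of_le_of_lt hcIcc.2 hs₀.2
  -- u > 0 on [a, c)
  have hupos : ∀ t ∈ Set.Ico a c, 0 < u t := by
    intro t ht
    by_contra hle
    push_neg at hle
    rcases eq_or_lt_of_le hle with heq | hlt
    · have : t ∈ S := ⟨⟨ht.1, le_trans (le_of_lt ht.2) hcIcc.2⟩, by linarith⟩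
      exact absurd (csInf_le hSbdd this) (not_le.mpr ht.2)
    · obtain ⟨z, hz, huz'⟩ := intermediate_value_Icc' ht.1 (hucont.continuousOn)
        (Set.mem_Icc.mpr ⟨le_of_lt hlt, le_of_lt hua⟩)
      have : z ∈ S := ⟨⟨hz.1, le_trans (le_trans hz.2 (le_of_lt ht.2)) hcIcc.2⟩, huz'⟩
      have := csInf_le hSbdd this
      have := lt_of_le_of_lt hz.2 ht.2
      linarith
  have hunn : ∀ t ∈ Set.Icc a c, 0 ≤ u t := by
    intro t ht
    rcases eq_or_lt_of_le ht.2 with heq | hlt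
    · rw [heq, hucz]
    · exact le_of_lt (hupos t ⟨ht.1, hlt⟩)
  -- comparison function
  set v : ℝ → ℝ := fun s => Real.cos (ω * (s - a)) with hv
  have hvderiv : ∀ s : ℝ, HasDerivAt v (-(Real.sin (ω * (s - a)) * ω)) s := by
    intro s
    have h1 : HasDerivAt (fun s : ℝ => ω * (s - a)) ω s := by
      simpa using ((hasDerivAt_id s).sub_const a).const_mul ω
    have := (Real.hasDerivAt_cos (ω * (s - a))).comp s h1
    rw [show -(Real.sin (ω * (s - a)) * ω) = -Real.sin (ω * (s - a)) * ω by ring]; exact this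
  have hvpos : ∀ t ∈ Set.Icc a c, 0 < v t := by
    intro t ht
    apply Real.cos_pos_of_mem_Ioo
    constructor
    · have : 0 ≤ ω * (t - a) := mul_nonneg (le_of_lt hωpos) (by linarith [ht.1])
      linarith [Real.pi_pos]
    · calc ω * (t - a) < ω * (b - a) := by
            apply mul_lt_mul_of_pos_left _ hωpos
            have := ht.2; linarith
        _ = Real.pi / 2 := hωba
  -- u' is differentiable
  have hu1 : ContDiff ℝ 1 (deriv u) := by
    have h2 : ContDiff ℝ ((1 : ℕ) + 1) u := by norm_num at hu ⊢; exact hu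
    exact ((contDiff_succ_iff_deriv).mp h2).2.2
  have hu'diff : Differentiable ℝ (deriv u) := hu1.differentiable (by norm_num)
  have hudiff : Differentiable ℝ u := hu.differentiable (by norm_num)
  have hu''def : ∀ s, HasDerivAt (deriv u) (iteratedDeriv 2 u s) s := by
    intro s
    have : iteratedDeriv 2 u s = deriv (deriv u) s := by
      rw [iteratedDeriv_succ, iteratedDeriv_one]
    rw [this]
    exact (hu'diff s).hasDerivAt
  -- Wronskian
  set w : ℝ → ℝ := fun s => deriv u s * v s - u s * (-(Real.sin (ω * (s - a)) * ω)) with hw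
  have hwderiv : ∀ s : ℝ, HasDerivAt w
      (iteratedDeriv 2 u s * v s + ω ^ 2 * (u s * v s)) s := by
    intro s
    have hv' : HasDerivAt (fun t => -(Real.sin (ω * (t - a)) * ω))
        (-(Real.cos (ω * (s - a)) * ω) * ω) s := by
      have h1 : HasDerivAt (fun t : ℝ => ω * (t - a)) ω s := by
        simpa using ((hasDerivAt_id s).sub_const a).const_mul ω
      have := ((Real.hasDerivAt_sin (ω * (s - a))).comp s h1).mul_const ω
      rw [show -(Real.cos (ω * (s - a)) * ω) * ω = -(Real.cos (ω * (s - a)) * ω * ω) by ring]; exact this.neg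
    have h1 := ((hu''def s).mul (hvderiv s)).sub
      (((hudiff s).hasDerivAt.mul hv'))
    refine h1.congr_deriv ?_
    simp only [hv]
    ring
  have hwa : w a = 0 := by
    simp [hw, hua', hv]
  have hwmono : MonotoneOn w (Set.Icc a c) := by
    apply monotoneOn_of_deriv_nonneg (convex_Icc a c)
    · exact fun s _ => ((hwderiv s).continuousAt).continuousWithinAt
    · intro s hs
      exact ((hwderiv s).differentiableAt).differentiableWithinAt
    · intro s hs
      rw [interior_Icc] at hs
      rw [(hwderiv s).deriv]
      have hsab : s ∈ Set.Icc a b := ⟨le_of_lt hs.1, le_of_lt (lt_trans hs.2 hcb)⟩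
      have hode' : iteratedDeriv 2 u s = -(κ s * u s) := by linarith [hode s hsab]
      rw [hode']
      have huv0 : 0 ≤ u s := hunn s ⟨le_of_lt hs.1, le_of_lt hs.2⟩
      have hvv0 : 0 < v s := hvpos s ⟨le_of_lt hs.1, le_of_lt hs.2⟩
      have hκs : κ s ≤ ω ^ 2 := le_trans (hκk₀ s hsab) hk₀
      have : -(κ s * u s) * v s + ω ^ 2 * (u s * v s) = (ω ^ 2 - κ s) * (u s * v s) := by ring
      rw [this]
      exact mul_nonneg (by linarith) (mul_nonneg huv0 (le_of_lt hvv0))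
  have hwnn : ∀ s ∈ Set.Icc a c, 0 ≤ w s := by
    intro s hs
    have := hwmono (Set.left_mem_Icc.mpr (le_of_lt hac)) hs hs.1
    rw [hwa] at this
    exact this
  -- quotient u / v is monotone
  set f : ℝ → ℝ := fun s => u s / v s with hf
  have hfmono : MonotoneOn f (Set.Icc a c) := by
    have hder : ∀ s ∈ Set.Icc a c, HasDerivAt f (w s / (v s) ^ 2) s := by
      intro s hs
      have := ((hudiff s).hasDerivAt.div (hvderiv s) (ne_of_gt (hvpos s hs)))
      refine this.congr_deriv ?_
      all_goals (simp only [hw]; try ring)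
    apply monotoneOn_of_deriv_nonneg (convex_Icc a c)
    · intro s hs
      exact ((hder s hs).continuousAt).continuousWithinAt
    · intro s hs
      rw [interior_Icc] at hs
      have hs' : s ∈ Set.Icc a c := ⟨le_of_lt hs.1, le_of_lt hs.2⟩
      exact ((hder s hs').differentiableAt).differentiableWithinAt
    · intro s hs
      rw [interior_Icc] at hs
      have hs' : s ∈ Set.Icc a c := ⟨le_of_lt hs.1, le_of_lt hs.2⟩
      rw [(hder s hs').deriv]
      exact div_nonneg (hwnn s hs') (sq_nonneg _)
  have hfa : f a = u a := by simp [hf, hv]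
  have hfc : f c = 0 := by simp [hf, hucz]
  have := hfmono (Set.left_mem_Icc.mpr (le_of_lt hac))
    (Set.right_mem_Icc.mpr (le_of_lt hac)) (le_of_lt hac)
  rw [hfa, hfc] at this
  linarith

/-- Sturm-type nonoscillation, Neumann data: if `u'' + κu = 0`
on `[a,b]` with `u(a) ≠ 0`, `u'(a) = 0`, and `κ ≤ k₀ ≤ (π/(2(b−a)))²`, then `u`
has no zero in `(a,b)`. -/
theorem sturm_nonoscillation_neumann (a b k₀ : ℝ) (hab : a < b)
    (κ u : ℝ → ℝ) (hκ : ContinuousOn κ (Set.Icc a b)) (hu : ContDiff ℝ 2 u)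
    (hode : ∀ s ∈ Set.Icc a b, iteratedDeriv 2 u s + κ s * u s = 0)
    (hua : u a ≠ 0) (hua' : deriv u a = 0)
    (hκk₀ : ∀ s ∈ Set.Icc a b, κ s ≤ k₀)
    (hk₀ : k₀ ≤ (Real.pi / (2 * (b - a))) ^ 2) :
    ∀ s ∈ Set.Ioo a b, u s ≠ 0 := by
  rcases lt_or_gt_of_ne hua with hneg | hpos
  · -- apply the aux lemma to -u
    intro s hs h
    have hnu : ContDiff ℝ 2 (fun t => -u t) := hu.neg
    have hnode : ∀ t ∈ Set.Icc a b, iteratedDeriv 2 (fun t => -u t) t + κ t * (-u t) = 0 := by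
      intro t ht
      have : iteratedDeriv 2 (fun t => -u t) t = -(iteratedDeriv 2 u t) := by
        show iteratedDeriv 2 (-u) t = _
        rw [iteratedDeriv_neg]
      rw [this]
      linarith [hode t ht]
    have hnua : 0 < -u a := by linarith
    have hnua' : deriv (fun t => -u t) a = 0 := by
      rw [deriv.fun_neg, hua']; ring
    have := sturm_aux a b k₀ hab κ (fun t => -u t) hnu hnode hnua hnua' hκk₀ hk₀ s hs
    apply this
    simp [h]
  · intro s hs h
    exact sturm_aux a b k₀ hab κ u hu hode hpos hua' hκk₀ hk₀ s hs h
end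

section
/- Let κ : I → ℝ be continuous on an interval I, and suppose either (a) κ is constant, (b) κ ≤ 0, or (c) κ ≤ k₁ for a positive constant k₁ with k₁ ≤ (π/L)² where L is the length of I. Then the Lagrange kernel K of y ↦ y''' + κy' satisfies K(s;r) ≥ 0 for all r, s ∈ I with s > r. -/
open Set Filter Real

set_option maxHeartbeats 1000000

/-- If `v z = 0` and `v' z > 0` then `v > 0` on some right neighbourhood. -/
lemma aux_pos_right {v : ℝ → ℝ} {z c : ℝ} (hd : HasDerivAt v c z) (hc : 0 < c)
    (hz : v z = 0) : ∃ ε > 0, ∀ x, z < x → x < z + ε → 0 < v x := by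
  have h := hasDerivAt_iff_tendsto_slope.1 hd
  have h2 : ∀ᶠ x in nhdsWithin z {z}ᶜ, 0 < slope v z x := h.eventually (lt_mem_nhds hc)
  have h3 : ∀ᶠ x in nhdsWithin z (Set.Ioi z), 0 < slope v z x :=
    h2.filter_mono (nhdsWithin_mono z (fun x hx => ne_of_gt hx))
  obtain ⟨u, hu, hsub⟩ := mem_nhdsGT_iff_exists_Ioo_subset.mp h3
  refine ⟨u - z, by linarith [mem_Ioi.mp hu], fun x hx1 hx2 => ?_⟩
  have hx : x ∈ Set.Ioo z u := ⟨hx1, by linarith⟩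
  have hs := hsub hx
  have hxz : (0:ℝ) < x - z := by linarith
  have hs' : 0 < slope v z x := hs
  rw [slope_def_field] at hs'
  have := mul_pos hs' hxz
  rw [div_mul_cancel₀ _ (ne_of_gt hxz)] at this
  linarith [hz ▸ this]

/-- First zero extraction: if `v r = 0`, `v' r = 1` and `v t < 0` for some
`t ∈ [r, b]`, then there is a first point `z ∈ (r, t]` where `v` vanishes,
with `v ≥ 0` on `[r, z]` and points where `v < 0` arbitrarily close to the
right of `z`. -/
lemma aux_first_zero {v : ℝ → ℝ} (hv : Continuous v) {r b t : ℝ}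
    (ht : t ∈ Set.Icc r b) (hvt : v t < 0) (hvr : v r = 0) (hd : HasDerivAt v 1 r) :
    ∃ z ∈ Set.Ioc r t, v z = 0 ∧ (∀ x ∈ Set.Icc r z, 0 ≤ v x) ∧
      ∀ ε > 0, ∃ x, v x < 0 ∧ z ≤ x ∧ x < z + ε ∧ x ≤ t := by
  obtain ⟨ε₀, hε₀, hpos⟩ := aux_pos_right hd one_pos hvr
  set S : Set ℝ := {x | v x < 0 ∧ x ∈ Set.Icc r t} with hS
  have htS : t ∈ S := ⟨hvt, ht.1, le_refl t⟩
  have hne : S.Nonempty := ⟨t, htS⟩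
  have hbdd : BddBelow S := ⟨r, fun x hx => hx.2.1⟩
  set z := sInf S with hz
  have hzt : z ≤ t := csInf_le hbdd htS
  have hSlb : ∀ x ∈ S, r + ε₀ ≤ x := by
    intro x hx
    by_contra hcon
    push_neg at hcon
    have hxr : r < x := lt_of_le_of_ne hx.2.1 (fun h => by rw [← h] at hx; linarith [hx.1, hvr])
    exact absurd (hpos x hxr hcon) (by linarith [hx.1])
  have hrz : r < z := lt_of_lt_of_le (by linarith) (le_csInf hne hSlb)
  have hnonneg : ∀ x ∈ Set.Ico r z, 0 ≤ v x := by
    intro x hx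
    by_contra hcon
    push_neg at hcon
    have hxS : x ∈ S := ⟨hcon, hx.1, le_trans (le_of_lt hx.2) hzt⟩
    exact absurd (csInf_le hbdd hxS) (not_le.mpr hx.2)
  have hvz_le : v z ≤ 0 := by
    have hcl : z ∈ closure S := csInf_mem_closure hne hbdd
    have hsub : closure S ⊆ {x | v x ≤ 0} :=
      closure_minimal (fun x hx => le_of_lt hx.1) (isClosed_le hv continuous_const)
    exact hsub hcl
  have hvz_ge : 0 ≤ v z := by
    have hlim : Tendsto v (nhdsWithin z (Set.Iio z)) (nhds (v z)) :=
      (hv.continuousAt).continuousWithinAt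
    have hev : ∀ᶠ x in nhdsWithin z (Set.Iio z), 0 ≤ v x := by
      filter_upwards [Ico_mem_nhdsLT_of_mem (⟨hrz, le_refl z⟩ : z ∈ Set.Ioc r z)] with x hx
      exact hnonneg x hx
    exact ge_of_tendsto hlim hev
  have hvz : v z = 0 := le_antisymm hvz_le hvz_ge
  refine ⟨z, ⟨hrz, hzt⟩, hvz, ?_, ?_⟩
  · intro x hx
    rcases lt_or_eq_of_le hx.2 with h | h
    · exact hnonneg x ⟨hx.1, h⟩
    · rw [h, hvz]
  · intro ε hε
    obtain ⟨x, hxS, hxlt⟩ := (csInf_lt_iff hbdd hne).mp (show sInf S < z + ε by linarith)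
    exact ⟨x, hxS.1, csInf_le hbdd hxS, hxlt, hxS.2.2⟩

/-- A function with vanishing derivative on `[a,b]` is constant there. -/
lemma aux_const_on_Icc {f : ℝ → ℝ} {a b : ℝ} (hf : Continuous f)
    (h : ∀ x ∈ Set.Icc a b, HasDerivAt f 0 x) :
    ∀ x ∈ Set.Icc a b, ∀ y ∈ Set.Icc a b, f x = f y := by
  have key : ∀ x ∈ Set.Icc a b, f x = f a := by
    intro x hx
    exact constant_of_has_deriv_right_zero (hf.continuousOn)
      (fun y hy => (h y ⟨hy.1, le_of_lt hy.2⟩).hasDerivWithinAt) x hx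
  intro x hx y hy
  rw [key x hx, key y hy]

/-- the Lagrange kernel of `y ↦ y''' + κy'` on `I = [a,b]` is
forward positive provided (a) `κ` is constant, (b) `κ ≤ 0`, or (c) `κ ≤ k₁` for
a positive constant `k₁` with `k₁ ≤ (π/L)²`, `L` the length of `I`. -/
theorem forward_positive_third_order (a b : ℝ) (hab : a < b) (κ : ℝ → ℝ)
    (hκ : ContinuousOn κ (Set.Icc a b)) (K : ℝ → ℝ → ℝ)
    (hKsmooth : ∀ r, ContDiff ℝ 3 (fun s => K s r))
    (hKode : ∀ r ∈ Set.Icc a b, ∀ s ∈ Set.Icc a b,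
      iteratedDeriv 3 (fun u => K u r) s + κ s * deriv (fun u => K u r) s = 0)
    (hK0 : ∀ r ∈ Set.Icc a b, K r r = 0)
    (hK1 : ∀ r ∈ Set.Icc a b, deriv (fun u => K u r) r = 0)
    (hK2 : ∀ r ∈ Set.Icc a b, iteratedDeriv 2 (fun u => K u r) r = 1)
    (hcase : (∃ c : ℝ, ∀ s ∈ Set.Icc a b, κ s = c) ∨
      (∀ s ∈ Set.Icc a b, κ s ≤ 0) ∨
      (∃ k₁ : ℝ, 0 < k₁ ∧ k₁ ≤ (Real.pi / (b - a)) ^ 2 ∧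
        ∀ s ∈ Set.Icc a b, κ s ≤ k₁)) :
    ∀ r ∈ Set.Icc a b, ∀ s ∈ Set.Icc a b, r < s → 0 ≤ K s r := by
  intro r hr s hs hrs
  set u : ℝ → ℝ := fun x => K x r with hu_def
  have hu : ContDiff ℝ 3 u := hKsmooth r
  have hu' : ContDiff ℝ (2 + 1) u := by exact_mod_cast hu
  set v : ℝ → ℝ := deriv u with hv_def
  have hudiff : Differentiable ℝ u := (contDiff_succ_iff_deriv.mp hu').1
  have hv2 : ContDiff ℝ 2 v := (contDiff_succ_iff_deriv.mp hu').2.2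
  have hv2' : ContDiff ℝ (1 + 1) v := by exact_mod_cast hv2
  have hvdiff : Differentiable ℝ v := (contDiff_succ_iff_deriv.mp hv2').1
  set w : ℝ → ℝ := deriv v with hw_def
  have hw1 : ContDiff ℝ 1 w := (contDiff_succ_iff_deriv.mp hv2').2.2
  have hw1' : ContDiff ℝ (0 + 1) w := by exact_mod_cast hw1
  have hwdiff : Differentiable ℝ w := (contDiff_succ_iff_deriv.mp hw1').1
  have hvcont : Continuous v := hvdiff.continuous
  have hwcont : Continuous w := hwdiff.continuous
  -- initial conditions
  have hur : u r = 0 := hK0 r hr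
  have hvr : v r = 0 := hK1 r hr
  have hwr : w r = 1 := by
    have h := hK2 r hr
    rwa [iteratedDeriv_succ, iteratedDeriv_one] at h
  -- ODE
  have hode : ∀ x ∈ Set.Icc a b, deriv w x = -κ x * v x := by
    intro x hx
    have h := hKode r hr x hx
    rw [iteratedDeriv_succ, iteratedDeriv_succ, iteratedDeriv_one] at h
    rw [← hv_def, ← hw_def] at h
    linarith
  -- reduction: if v ≥ 0 on [r, s] then done
  have reduce : (∀ x ∈ Set.Icc r s, 0 ≤ v x) → 0 ≤ K s r := by
    intro hvpos
    have hmono : MonotoneOn u (Set.Icc r s) := by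
      apply monotoneOn_of_deriv_nonneg (convex_Icc r s) hudiff.continuous.continuousOn
        (hudiff.differentiableOn)
      intro x hx
      rw [interior_Icc] at hx
      exact hvpos x ⟨le_of_lt hx.1, le_of_lt hx.2⟩
    have := hmono (Set.left_mem_Icc.mpr (le_of_lt hrs))
      (Set.right_mem_Icc.mpr (le_of_lt hrs)) (le_of_lt hrs)
    rw [hur] at this
    exact this
  -- some helper facts
  have hra : a ≤ r := hr.1
  have hsb : s ≤ b := hs.2
  have hIcc_sub : Set.Icc r s ⊆ Set.Icc a b := Set.Icc_subset_Icc hra hsb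
  have hdvr : HasDerivAt v 1 r := by
    have := (hvdiff r).hasDerivAt
    rwa [← hw_def, hwr] at this
  -- CASE B machinery: κ ≤ 0 on [a,b] implies conclusion
  have caseB : (∀ x ∈ Set.Icc a b, κ x ≤ 0) → 0 ≤ K s r := by
    intro hκneg
    apply reduce
    intro t ht
    by_contra hcon
    push_neg at hcon
    obtain ⟨z, hz, hvz, hvnn, -⟩ := aux_first_zero hvcont ht hcon hvr hdvr
    have hzs : z ≤ s := le_trans hz.2 ht.2
    have hsub : Set.Icc r z ⊆ Set.Icc a b := Set.Icc_subset_Icc hra (le_trans hzs hsb)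
    -- w monotone on [r, z], so w ≥ 1 there
    have hwmono : MonotoneOn w (Set.Icc r z) := by
      apply monotoneOn_of_deriv_nonneg (convex_Icc r z) hwcont.continuousOn
        hwdiff.differentiableOn
      intro x hx
      rw [interior_Icc] at hx
      have hxm : x ∈ Set.Icc r z := ⟨le_of_lt hx.1, le_of_lt hx.2⟩
      rw [hode x (hsub hxm)]
      have h1 : κ x ≤ 0 := hκneg x (hsub hxm)
      have h2 : 0 ≤ v x := hvnn x hxm
      nlinarith
    have hwge : ∀ x ∈ Set.Icc r z, 1 ≤ w x := by
      intro x hx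
      have := hwmono (Set.left_mem_Icc.mpr (le_trans hx.1 hx.2)) hx hx.1
      rwa [hwr] at this
    -- hence v z ≥ z - r > 0, contradiction
    have hgmono : MonotoneOn (fun x => v x - x) (Set.Icc r z) := by
      apply monotoneOn_of_deriv_nonneg (f := fun x => v x - x) (convex_Icc r z)
        (Continuous.continuousOn (by continuity))
        (Differentiable.differentiableOn (fun x => ((hvdiff x).sub (differentiable_id x))))
      intro x hx
      rw [interior_Icc] at hx
      have hder : HasDerivAt (fun x => v x - x) (w x - 1) x :=
        ((hvdiff x).hasDerivAt).sub (hasDerivAt_id x)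
      rw [hder.deriv]
      linarith [hwge x ⟨le_of_lt hx.1, le_of_lt hx.2⟩]
    have hrz : r < z := hz.1
    have := hgmono (Set.left_mem_Icc.mpr (le_of_lt hrz))
      (Set.right_mem_Icc.mpr (le_of_lt hrz)) (le_of_lt hrz)
    simp only [hvr, hvz] at this
    linarith
  rcases hcase with ⟨c, hconst⟩ | hneg | ⟨k₁, hk₁pos, hk₁le, hk₁bd⟩
  · -- CASE A : κ constant
    rcases le_or_gt c 0 with hc0 | hc0
    · exact caseB (fun x hx => (hconst x hx) ▸ hc0)
    · -- energy argument for constant c > 0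
      -- first : w + c * u constant = 1 on [a,b]
      have hGd : ∀ x ∈ Set.Icc a b, HasDerivAt (fun x => w x + c * u x) 0 x := by
        intro x hx
        have hd : HasDerivAt (fun x => w x + c * u x)
            (deriv w x + c * v x) x :=
          ((hwdiff x).hasDerivAt).add (((hudiff x).hasDerivAt).const_mul c)
        have heq : deriv w x + c * v x = 0 := by
          rw [hode x hx, hconst x hx]; ring
        rwa [heq] at hd
      have hG : ∀ x ∈ Set.Icc a b, w x + c * u x = 1 := by
        have hconstG := aux_const_on_Icc (f := fun x => w x + c * u x)
          (hwcont.add (continuous_const.mul hudiff.continuous)) hGd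
        intro x hx
        have := hconstG x hx r hr
        rw [this, hwr, hur]; ring
      -- energy : v² + c u² - 2u constant = 0 on [a,b]
      have hE : ∀ x ∈ Set.Icc a b, v x ^ 2 + c * u x ^ 2 - 2 * u x = 0 := by
        have hEd : ∀ x ∈ Set.Icc a b, HasDerivAt
            (fun x => v x ^ 2 + c * u x ^ 2 - 2 * u x) 0 x := by
          intro x hx
          have hd : HasDerivAt (fun x => v x ^ 2 + c * u x ^ 2 - 2 * u x)
              ((2 * v x * w x) + c * (2 * u x * v x) - 2 * v x) x := by
            have h1 : HasDerivAt (fun x => v x ^ 2) (2 * v x * w x) x := by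
              have := ((hvdiff x).hasDerivAt).pow 2
              exact this.congr_deriv (by ring)
            have h2 : HasDerivAt (fun x => u x ^ 2) (2 * u x * v x) x := by
              have := ((hudiff x).hasDerivAt).pow 2
              exact this.congr_deriv (by ring)
            exact (h1.add (h2.const_mul c)).sub (((hudiff x).hasDerivAt).const_mul 2)
          have heq : (2 * v x * w x) + c * (2 * u x * v x) - 2 * v x = 0 := by
            have h := hG x hx
            linear_combination (2 * v x) * h
          rwa [heq] at hd
        have hconstE := aux_const_on_Icc (f := fun x => v x ^ 2 + c * u x ^ 2 - 2 * u x)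
          (((hvcont.pow 2).add (continuous_const.mul (hudiff.continuous.pow 2))).sub
            (continuous_const.mul hudiff.continuous)) hEd
        intro x hx
        have := hconstE x hx r hr
        rw [this, hvr, hur]; ring
      have := hE s hs
      nlinarith [sq_nonneg (v s), sq_nonneg (u s)]
  · -- CASE B
    exact caseB hneg
  · -- CASE C : κ ≤ k₁ ≤ (π/L)²
    set ω := Real.sqrt k₁ with hω_def
    have hωpos : 0 < ω := Real.sqrt_pos.mpr hk₁pos
    have hω2 : ω ^ 2 = k₁ := Real.sq_sqrt (le_of_lt hk₁pos)
    have hωL : ω * (b - a) ≤ π := by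
      have hba : (0:ℝ) < b - a := by linarith
      have h1 : ω ≤ π / (b - a) := by
        have := Real.sqrt_le_sqrt hk₁le
        rwa [← hω_def, Real.sqrt_sq (le_of_lt (div_pos Real.pi_pos hba))] at this
      calc ω * (b - a) ≤ (π / (b - a)) * (b - a) := by nlinarith
        _ = π := by field_simp
    -- bound on κ
    obtain ⟨M, hM⟩ := (isCompact_Icc (a := a) (b := b)).exists_bound_of_continuousOn hκ
    apply reduce
    intro t ht
    by_contra hcon
    push_neg at hcon
    obtain ⟨z, hz, hvz, hvnn, hnear⟩ := aux_first_zero hvcont ht hcon hvr hdvr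
    have hrz : r < z := hz.1
    have hzt : z ≤ t := hz.2
    have hzs : z ≤ s := le_trans hzt ht.2
    have hzb : z ≤ b := le_trans hzs hsb
    have hsub : Set.Icc r z ⊆ Set.Icc a b := Set.Icc_subset_Icc hra hzb
    -- sin is nonneg on [r, z]
    have hsinnn : ∀ x ∈ Set.Icc r z, 0 ≤ Real.sin (ω * (x - r)) := by
      intro x hx
      apply Real.sin_nonneg_of_nonneg_of_le_pi
      · exact mul_nonneg (le_of_lt hωpos) (by linarith [hx.1])
      · have h1 : x - r ≤ b - a := by
          have h2 := (hsub hx).2; have h3 := hr.1; linarith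
        calc ω * (x - r) ≤ ω * (b - a) := by
              exact mul_le_mul_of_nonneg_left h1 (le_of_lt hωpos)
          _ ≤ π := hωL
    -- Wronskian W = w * sin(ω(x-r)) - v * ω cos(ω(x-r))
    set W : ℝ → ℝ := fun x => w x * Real.sin (ω * (x - r)) - v x * (ω * Real.cos (ω * (x - r)))
      with hW_def
    have hlin : ∀ x : ℝ, HasDerivAt (fun y => ω * (y - r)) ω x := by
      intro x
      have := ((hasDerivAt_id x).sub_const r).const_mul ω
      simpa using this
    have hWd : ∀ x : ℝ, HasDerivAt W
        (deriv w x * Real.sin (ω * (x - r)) + ω ^ 2 * (v x * Real.sin (ω * (x - r)))) x := by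
      intro x
      have hS : HasDerivAt (fun y => Real.sin (ω * (y - r)))
          (Real.cos (ω * (x - r)) * ω) x := (Real.hasDerivAt_sin _).comp x (hlin x)
      have hC : HasDerivAt (fun y => ω * Real.cos (ω * (y - r)))
          (ω * (-Real.sin (ω * (x - r)) * ω)) x :=
        (((Real.hasDerivAt_cos _).comp x (hlin x))).const_mul ω
      have h1 : HasDerivAt (fun y => w y * Real.sin (ω * (y - r)))
          (deriv w x * Real.sin (ω * (x - r)) + w x * (Real.cos (ω * (x - r)) * ω)) x :=
        ((hwdiff x).hasDerivAt).mul hS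
      have h2 : HasDerivAt (fun y => v y * (ω * Real.cos (ω * (y - r))))
          (w x * (ω * Real.cos (ω * (x - r))) + v x * (ω * (-Real.sin (ω * (x - r)) * ω))) x :=
        ((hvdiff x).hasDerivAt).mul hC
      have := h1.sub h2
      exact this.congr_deriv (by ring)
    have hlincont : Continuous (fun y : ℝ => ω * (y - r)) :=
      continuous_const.mul (continuous_id.sub continuous_const)
    have hWcont : Continuous W :=
      (hwcont.mul (Real.continuous_sin.comp hlincont)).sub
        (hvcont.mul (continuous_const.mul (Real.continuous_cos.comp hlincont)))
    have hWdiff : Differentiable ℝ W := fun x => (hWd x).differentiableAt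
    have hWmono : MonotoneOn W (Set.Icc r z) := by
      apply monotoneOn_of_deriv_nonneg (convex_Icc r z) hWcont.continuousOn
        hWdiff.differentiableOn
      intro x hx
      rw [interior_Icc] at hx
      have hxm : x ∈ Set.Icc r z := ⟨le_of_lt hx.1, le_of_lt hx.2⟩
      rw [(hWd x).deriv, hode x (hsub hxm)]
      have h1 : 0 ≤ v x := hvnn x hxm
      have h2 : 0 ≤ Real.sin (ω * (x - r)) := hsinnn x hxm
      have h3 : κ x ≤ k₁ := hk₁bd x (hsub hxm)
      have h4 : 0 ≤ (k₁ - κ x) * (v x * Real.sin (ω * (x - r))) :=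
        mul_nonneg (by linarith) (mul_nonneg h1 h2)
      rw [hω2]
      nlinarith [h4]
    have hWr : W r = 0 := by
      simp [hW_def, hvr]
    have hWz : 0 ≤ W z := by
      have := hWmono (Set.left_mem_Icc.mpr (le_of_lt hrz))
        (Set.right_mem_Icc.mpr (le_of_lt hrz)) (le_of_lt hrz)
      rwa [hWr] at this
    have hWzval : W z = w z * Real.sin (ω * (z - r)) := by
      simp [hW_def, hvz]
    rcases eq_or_lt_of_le (hsinnn z (Set.right_mem_Icc.mpr (le_of_lt hrz))) with hsz | hsz
    · -- sin(ω(z-r)) = 0 ⇒ ω(z-r) = π ⇒ z = b, r = a, and t = z, contradiction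
      have hθpos : 0 < ω * (z - r) := mul_pos hωpos (by linarith)
      have hθle : ω * (z - r) ≤ π := by
        have h1 : z - r ≤ b - a := by linarith [hr.1]
        calc ω * (z - r) ≤ ω * (b - a) := mul_le_mul_of_nonneg_left h1 (le_of_lt hωpos)
          _ ≤ π := hωL
      have hθeq : ω * (z - r) = π := by
        by_contra hne
        have hθlt : ω * (z - r) < π := lt_of_le_of_ne hθle hne
        have hpos := Real.sin_pos_of_pos_of_lt_pi hθpos hθlt
        rw [← hsz] at hpos
        exact lt_irrefl 0 hpos
      -- then z - r = b - a forces z = b (and r = a); but z ≤ t ≤ s ≤ b so t = z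
      have hzr_ba : b - a ≤ z - r := by
        have h5 : ω * (b - a) ≤ ω * (z - r) := by rw [hθeq]; exact hωL
        exact le_of_mul_le_mul_left h5 hωpos
      have hzb' : z = b := by linarith [hr.1]
      have htz : t = z := by
        have : t ≤ b := le_trans ht.2 hsb
        linarith [hzt]
      rw [htz, hvz] at hcon
      linarith
    · -- sin(ω(z-r)) > 0 ⇒ w z ≥ 0
      have hwz : 0 ≤ w z := by
        rw [hWzval] at hWz
        by_contra hcon2
        push_neg at hcon2
        nlinarith
      rcases eq_or_lt_of_le hwz with hwz0 | hwzpos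
      · -- w z = 0 : Gronwall uniqueness ⇒ v ≡ 0 on [z, t], contradicting v t < 0
        set E : ℝ → ℝ := fun x => v x ^ 2 + w x ^ 2 with hE_def
        have hM0 : 0 ≤ M := le_trans (norm_nonneg _) (hM a (Set.left_mem_Icc.mpr (le_of_lt hab)))
        have hEd : ∀ x : ℝ, HasDerivAt E (2 * v x * w x + 2 * w x * deriv w x) x := by
          intro x
          have h1 : HasDerivAt (fun y => v y ^ 2) (2 * v x * w x) x := by
            have := ((hvdiff x).hasDerivAt).pow 2
            exact this.congr_deriv (by ring)
          have h2 : HasDerivAt (fun y => w y ^ 2) (2 * w x * deriv w x) x := by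
            have := ((hwdiff x).hasDerivAt).pow 2
            exact this.congr_deriv (by ring)
          exact h1.add h2
        have hbound : ∀ x ∈ Set.Ico z t, ‖2 * v x * w x + 2 * w x * deriv w x‖ ≤
            (2 * (1 + M)) * ‖E x‖ + 0 := by
          intro x hx
          have hxab : x ∈ Set.Icc a b := ⟨le_trans hra (le_trans (le_of_lt hrz) hx.1),
            le_trans (le_of_lt hx.2) (le_trans ht.2 hsb)⟩
          rw [hode x hxab]
          have hκx : |κ x| ≤ M := by
            have := hM x hxab; rwa [Real.norm_eq_abs] at this
          have hEnn : 0 ≤ E x := by positivity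
          rw [Real.norm_eq_abs, Real.norm_eq_abs, abs_of_nonneg hEnn, add_zero]
          simp only [hE_def]
          have habs : |2 * v x * w x + 2 * w x * (-κ x * v x)| ≤
              2 * |v x| * |w x| + 2 * |κ x| * (|v x| * |w x|) := by
            calc |2 * v x * w x + 2 * w x * (-κ x * v x)|
                ≤ |2 * v x * w x| + |2 * w x * (-κ x * v x)| := abs_add_le _ _
              _ = 2 * |v x| * |w x| + 2 * |κ x| * (|v x| * |w x|) := by
                  rw [abs_mul, abs_mul, abs_mul, abs_mul, abs_mul, abs_neg]
                  simp [abs_of_nonneg]; ring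
          have hvw : 2 * (|v x| * |w x|) ≤ v x ^ 2 + w x ^ 2 := by
            nlinarith [sq_nonneg (|v x| - |w x|), sq_abs (v x), sq_abs (w x)]
          have : 2 * |κ x| * (|v x| * |w x|) ≤ M * (v x ^ 2 + w x ^ 2) := by
            calc 2 * |κ x| * (|v x| * |w x|) = |κ x| * (2 * (|v x| * |w x|)) := by ring
              _ ≤ M * (v x ^ 2 + w x ^ 2) :=
                  mul_le_mul hκx hvw (by positivity) hM0
          nlinarith [abs_nonneg (v x), abs_nonneg (w x)]
        have hgron := norm_le_gronwallBound_of_norm_deriv_right_le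
          (f := E) (f' := fun x => 2 * v x * w x + 2 * w x * deriv w x)
          (δ := 0) (K := 2 * (1 + M)) (ε := 0) (a := z) (b := t)
          (((hvcont.pow 2).add (hwcont.pow 2)).continuousOn)
          (fun x _ => (hEd x).hasDerivWithinAt)
          (by rw [hE_def]; simp [hvz, ← hwz0]) hbound
        have hEt := hgron t (Set.right_mem_Icc.mpr hzt)
        rw [gronwallBound_ε0, Real.norm_eq_abs] at hEt
        have hEt' : E t ≤ 0 := le_trans (le_abs_self _) (by simpa using hEt)
        simp only [hE_def] at hEt'
        nlinarith [sq_nonneg (v t), sq_nonneg (w t)]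
      · -- w z > 0 : v > 0 just right of z, contradicting points of S near z
        have hdz : HasDerivAt v (w z) z := (hvdiff z).hasDerivAt
        obtain ⟨ε, hε, hpos⟩ := aux_pos_right hdz hwzpos hvz
        obtain ⟨x, hx1, hx2, hx3, hx4⟩ := hnear ε hε
        have hxz : z < x := lt_of_le_of_ne hx2 (fun h => by rw [← h] at hx1; linarith)
        linarith [hpos x hxz hx3]
end

section
/- Let κ be continuous on [a,b] and x ∈ C³([a,b]) satisfy x''' + κx' = 0, x(a)=0, x'(a)=1, x''(a)=0. If k₀ ≤ κ(s) ≤ k₁ on [a,b] with k₁ ≤ (π/(2(b−a)))², then s_{k₁}(b−a) ≤ x(b) ≤ s_{k₀}(b−a). Moreover equality in the lower (resp. upper) bound implies κ ≡ k₁ (resp. κ ≡ k₀) and x(s) = s_{k₁}(s−a) (resp. s_{k₀}(s−a)) on [a,b]. -/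
/-- The generalized cosine `c_k`, solving `u'' + k u = 0`, `u(0)=1`, `u'(0)=0`. -/
noncomputable def ck (k s : ℝ) : ℝ :=
  if 0 < k then Real.cos (Real.sqrt k * s)
  else if k = 0 then 1
  else Real.cosh (Real.sqrt (-k) * s)

/-- The generalized sine `s_k`, solving `u'' + k u = 0`, `u(0)=0`, `u'(0)=1`. -/
noncomputable def sk (k s : ℝ) : ℝ :=
  if 0 < k then Real.sin (Real.sqrt k * s) / Real.sqrt k
  else if k = 0 then s
  else Real.sinh (Real.sqrt (-k) * s) / Real.sqrt (-k)

open Real Set Filter intervalIntegral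

lemma sk_zero (k : ℝ) : sk k 0 = 0 := by
  unfold sk; split_ifs <;> simp

lemma ck_zero (k : ℝ) : ck k 0 = 1 := by
  unfold ck; split_ifs <;> simp

lemma hasDerivAt_sk (k s : ℝ) : HasDerivAt (sk k) (ck k s) s := by
  rcases lt_trichotomy 0 k with hk | hk | hk
  · have hs0 : Real.sqrt k ≠ 0 := ne_of_gt (Real.sqrt_pos.mpr hk)
    have h1 : HasDerivAt (fun r : ℝ => Real.sin (Real.sqrt k * r))
        (Real.cos (Real.sqrt k * s) * Real.sqrt k) s := by
      simpa [Function.comp_def] using (Real.hasDerivAt_sin (Real.sqrt k * s)).comp s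
        ((hasDerivAt_id s).const_mul (Real.sqrt k))
    have h2 := h1.div_const (Real.sqrt k)
    have heq : sk k = fun r : ℝ => Real.sin (Real.sqrt k * r) / Real.sqrt k := by
      funext r; simp [sk, hk]
    rw [heq, show ck k s = Real.cos (Real.sqrt k * s) from by simp [ck, hk]]
    simpa [mul_div_assoc, div_self hs0] using h2
  · subst hk
    have heq : sk 0 = fun r : ℝ => r := by funext r; simp [sk]
    rw [heq, show ck 0 s = 1 from by simp [ck]]
    exact hasDerivAt_id s
  · have hk' : ¬ 0 < k := by linarith
    have hk'' : k ≠ 0 := by linarith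
    have hs0 : Real.sqrt (-k) ≠ 0 := ne_of_gt (Real.sqrt_pos.mpr (by linarith))
    have h1 : HasDerivAt (fun r : ℝ => Real.sinh (Real.sqrt (-k) * r))
        (Real.cosh (Real.sqrt (-k) * s) * Real.sqrt (-k)) s := by
      simpa [Function.comp_def] using (Real.hasDerivAt_sinh (Real.sqrt (-k) * s)).comp s
        ((hasDerivAt_id s).const_mul (Real.sqrt (-k)))
    have h2 := h1.div_const (Real.sqrt (-k))
    have heq : sk k = fun r : ℝ => Real.sinh (Real.sqrt (-k) * r) / Real.sqrt (-k) := by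
      funext r; simp [sk, hk', hk'']
    rw [heq, show ck k s = Real.cosh (Real.sqrt (-k) * s) from by simp [ck, hk', hk'']]
    simpa [mul_div_assoc, div_self hs0] using h2

lemma hasDerivAt_ck (k s : ℝ) : HasDerivAt (ck k) (-k * sk k s) s := by
  rcases lt_trichotomy 0 k with hk | hk | hk
  · have hsq : Real.sqrt k * Real.sqrt k = k := Real.mul_self_sqrt hk.le
    have hs0 : Real.sqrt k ≠ 0 := ne_of_gt (Real.sqrt_pos.mpr hk)
    have h1 : HasDerivAt (fun r : ℝ => Real.cos (Real.sqrt k * r))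
        (-Real.sin (Real.sqrt k * s) * Real.sqrt k) s := by
      simpa [Function.comp_def] using (Real.hasDerivAt_cos (Real.sqrt k * s)).comp s
        ((hasDerivAt_id s).const_mul (Real.sqrt k))
    have heq : ck k = fun r : ℝ => Real.cos (Real.sqrt k * r) := by
      funext r; simp [ck, hk]
    rw [heq, show sk k s = Real.sin (Real.sqrt k * s) / Real.sqrt k from by simp [sk, hk]]
    have : -k * (Real.sin (Real.sqrt k * s) / Real.sqrt k)
        = -Real.sin (Real.sqrt k * s) * Real.sqrt k := by
      field_simp; linear_combination (Real.sin (Real.sqrt k * s)) * hsq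
    rw [this]; exact h1
  · subst hk
    have heq : ck 0 = fun _ : ℝ => (1:ℝ) := by funext r; simp [ck]
    rw [heq, show -(0:ℝ) * sk 0 s = 0 from by ring]
    exact hasDerivAt_const s 1
  · have hk' : ¬ 0 < k := by linarith
    have hk'' : k ≠ 0 := by linarith
    have hsq : Real.sqrt (-k) * Real.sqrt (-k) = -k := Real.mul_self_sqrt (by linarith)
    have hs0 : Real.sqrt (-k) ≠ 0 := ne_of_gt (Real.sqrt_pos.mpr (by linarith))
    have h1 : HasDerivAt (fun r : ℝ => Real.cosh (Real.sqrt (-k) * r))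
        (Real.sinh (Real.sqrt (-k) * s) * Real.sqrt (-k)) s := by
      simpa [Function.comp_def] using (Real.hasDerivAt_cosh (Real.sqrt (-k) * s)).comp s
        ((hasDerivAt_id s).const_mul (Real.sqrt (-k)))
    have heq : ck k = fun r : ℝ => Real.cosh (Real.sqrt (-k) * r) := by
      funext r; simp [ck, hk', hk'']
    rw [heq, show sk k s = Real.sinh (Real.sqrt (-k) * s) / Real.sqrt (-k) from by
      simp [sk, hk', hk'']]
    have : -k * (Real.sinh (Real.sqrt (-k) * s) / Real.sqrt (-k))
        = Real.sinh (Real.sqrt (-k) * s) * Real.sqrt (-k) := by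
      field_simp; linear_combination (-Real.sinh (Real.sqrt (-k) * s)) * hsq
    rw [this]; exact h1

lemma contDiff_ck (k : ℝ) : ContDiff ℝ 2 (ck k) := by
  rcases lt_trichotomy 0 k with hk | hk | hk
  · have heq : ck k = fun r : ℝ => Real.cos (Real.sqrt k * r) := by funext r; simp [ck, hk]
    rw [heq]; exact Real.contDiff_cos.comp (contDiff_const.mul contDiff_id)
  · subst hk
    have heq : ck 0 = fun _ : ℝ => (1:ℝ) := by funext r; simp [ck]
    rw [heq]; exact contDiff_const
  · have hk' : ¬ 0 < k := by linarith
    have hk'' : k ≠ 0 := by linarith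
    have heq : ck k = fun r : ℝ => Real.cosh (Real.sqrt (-k) * r) := by
      funext r; simp [ck, hk', hk'']
    rw [heq]; exact Real.contDiff_cosh.comp (contDiff_const.mul contDiff_id)

lemma continuous_ck (k : ℝ) : Continuous (ck k) := (contDiff_ck k).continuous

lemma continuous_sk (k : ℝ) : Continuous (sk k) := by
  have h : Differentiable ℝ (sk k) := fun s => (hasDerivAt_sk k s).differentiableAt
  exact h.continuous

lemma hasDerivAt_skshift (k a s : ℝ) :
    HasDerivAt (fun r => sk k (r - a)) (ck k (s - a)) s := by
  simpa [Function.comp_def] using (hasDerivAt_sk k (s - a)).comp s ((hasDerivAt_id s).sub_const a)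

lemma hasDerivAt_ckshift (k a s : ℝ) :
    HasDerivAt (fun r => ck k (r - a)) (-k * sk k (s - a)) s := by
  simpa [Function.comp_def] using (hasDerivAt_ck k (s - a)).comp s ((hasDerivAt_id s).sub_const a)

lemma deriv_ckshift (k a : ℝ) :
    deriv (fun r => ck k (r - a)) = fun s => -k * sk k (s - a) :=
  funext fun s => (hasDerivAt_ckshift k a s).deriv

lemma deriv2_ckshift (k a s : ℝ) :
    deriv (deriv (fun r => ck k (r - a))) s = -k * ck k (s - a) := by
  rw [deriv_ckshift]
  exact HasDerivAt.deriv ((hasDerivAt_skshift k a s).const_mul (-k))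

lemma contDiff_ckshift (k a : ℝ) : ContDiff ℝ 2 (fun r => ck k (r - a)) :=
  (contDiff_ck k).comp (contDiff_id.sub contDiff_const)

lemma sqrt_mul_le {k L s : ℝ} (hL : 0 < L) (hk : k ≤ (Real.pi / (2 * L)) ^ 2)
    (h0 : 0 ≤ s) (hs : s ≤ L) : Real.sqrt k * s ≤ Real.pi / 2 := by
  have hpi : 0 < Real.pi / (2 * L) := div_pos Real.pi_pos (by linarith)
  have h1 : Real.sqrt k ≤ Real.pi / (2 * L) := by
    calc Real.sqrt k ≤ Real.sqrt ((Real.pi / (2 * L)) ^ 2) := Real.sqrt_le_sqrt hk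
    _ = Real.pi / (2 * L) := by rw [Real.sqrt_sq hpi.le]
  calc Real.sqrt k * s ≤ (Real.pi / (2 * L)) * L :=
        mul_le_mul h1 hs h0 hpi.le
  _ = Real.pi / 2 := by field_simp

lemma ck_nonneg {k L : ℝ} (hL : 0 < L) (hk : k ≤ (Real.pi / (2 * L)) ^ 2)
    {s : ℝ} (h0 : 0 ≤ s) (hs : s ≤ L) : 0 ≤ ck k s := by
  rcases lt_trichotomy 0 k with hkp | hkp | hkp
  · rw [show ck k s = Real.cos (Real.sqrt k * s) from by simp [ck, hkp]]
    apply Real.cos_nonneg_of_mem_Icc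
    refine ⟨?_, sqrt_mul_le hL hk h0 hs⟩
    have h3 : 0 ≤ Real.sqrt k * s := mul_nonneg (Real.sqrt_nonneg k) h0
    have := Real.pi_pos
    linarith
  · rw [show ck k s = 1 from by simp [ck, ← hkp]]; norm_num
  · rw [show ck k s = Real.cosh (Real.sqrt (-k) * s) from by
      simp [ck, not_lt.mpr hkp.le, hkp.ne]]
    exact (Real.cosh_pos _).le

lemma ck_pos {k L : ℝ} (hL : 0 < L) (hk : k ≤ (Real.pi / (2 * L)) ^ 2)
    {s : ℝ} (h0 : 0 ≤ s) (hs : s < L) : 0 < ck k s := by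
  rcases lt_trichotomy 0 k with hkp | hkp | hkp
  · rw [show ck k s = Real.cos (Real.sqrt k * s) from by simp [ck, hkp]]
    apply Real.cos_pos_of_mem_Ioo
    have hsk : 0 < Real.sqrt k := Real.sqrt_pos.mpr hkp
    have h1 : Real.sqrt k * s < Real.sqrt k * L := by
      exact (mul_lt_mul_iff_right₀ hsk).mpr hs
    have h2 : Real.sqrt k * L ≤ Real.pi / 2 := sqrt_mul_le hL hk hL.le le_rfl
    have h3 : 0 ≤ Real.sqrt k * s := mul_nonneg hsk.le h0
    constructor
    · have := Real.pi_pos; linarith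
    · linarith
  · rw [show ck k s = 1 from by simp [ck, ← hkp]]; norm_num
  · rw [show ck k s = Real.cosh (Real.sqrt (-k) * s) from by
      simp [ck, not_lt.mpr hkp.le, hkp.ne]]
    exact Real.cosh_pos _

lemma integral_ckshift (k a t : ℝ) : (∫ s in a..t, ck k (s - a)) = sk k (t - a) := by
  have h := intervalIntegral.integral_eq_sub_of_hasDerivAt
    (f := fun r => sk k (r - a)) (f' := fun r => ck k (r - a))
    (fun s _ => hasDerivAt_skshift k a s)
    (((continuous_ck k).comp (continuous_id.sub continuous_const)).intervalIntegrable a t)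
  simpa [sk_zero] using h

lemma nonneg_at_right {f : ℝ → ℝ} {a b : ℝ} (hab : a < b) (hf : Continuous f)
    (h : ∀ s ∈ Set.Ico a b, 0 ≤ f s) : 0 ≤ f b := by
  have hmem : b ∈ closure (Set.Ico a b) := by
    rw [closure_Ico hab.ne]; exact ⟨hab.le, le_rfl⟩
  haveI hne : Filter.NeBot (nhdsWithin b (Set.Ico a b)) :=
    mem_closure_iff_nhdsWithin_neBot.mp hmem
  refine ge_of_tendsto ((hf.continuousWithinAt :
    ContinuousWithinAt f (Set.Ico a b) b).tendsto) ?_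
  exact eventually_mem_nhdsWithin.mono h

lemma eqOn_Icc_of_eqOn_Ioo {κ : ℝ → ℝ} {a b c : ℝ} (hab : a < b)
    (hκ : ContinuousOn κ (Set.Icc a b)) (h : ∀ s ∈ Set.Ioo a b, κ s = c) :
    ∀ s ∈ Set.Icc a b, κ s = c := by
  have key : ∀ e ∈ Set.Icc a b, e ∈ closure (Set.Ioo a b) → κ e = c := by
    intro e he hecl
    haveI hne : Filter.NeBot (nhdsWithin e (Set.Ioo a b)) :=
      mem_closure_iff_nhdsWithin_neBot.mp hecl
    have h1 : Filter.Tendsto κ (nhdsWithin e (Set.Ioo a b)) (nhds (κ e)) :=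
      (hκ.continuousWithinAt he).tendsto.mono_left
        (nhdsWithin_mono e Set.Ioo_subset_Icc_self)
    have h2 : Filter.Tendsto κ (nhdsWithin e (Set.Ioo a b)) (nhds c) := by
      refine Filter.Tendsto.congr' ?_ tendsto_const_nhds
      exact eventually_mem_nhdsWithin.mono fun s hs => (h s hs).symm
    exact tendsto_nhds_unique h1 h2
  intro s hs
  exact key s hs (by rw [closure_Ioo hab.ne]; exact hs)

lemma contDiff_two_unpack {u : ℝ → ℝ} (hu : ContDiff ℝ 2 u) :
    Differentiable ℝ u ∧ Differentiable ℝ (deriv u) ∧ Continuous (deriv (deriv u)) := by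
  rw [show (2 : WithTop ℕ∞) = 1 + 1 by norm_num, contDiff_succ_iff_deriv,
    contDiff_one_iff_deriv] at hu
  exact ⟨hu.1, hu.2.2.1, hu.2.2.2⟩

lemma comparison_aux {a t : ℝ} (hat : a ≤ t) {u v p q : ℝ → ℝ}
    (hu : ContDiff ℝ 2 u) (hv : ContDiff ℝ 2 v)
    (hua : u a = 1) (hua' : deriv u a = 0) (hva : v a = 1) (hva' : deriv v a = 0)
    (hup : ∀ s ∈ Set.Icc a t, deriv (deriv u) s = -(p s) * u s)
    (hvq : ∀ s ∈ Set.Icc a t, deriv (deriv v) s = -(q s) * v s)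
    (hsign : ∀ s ∈ Set.Icc a t, 0 ≤ (q s - p s) * (u s * v s))
    (hvpos : ∀ s ∈ Set.Icc a t, 0 < v s) :
    ∀ s ∈ Set.Icc a t, v s ≤ u s := by
  obtain ⟨hu1, hu2, hu3⟩ := contDiff_two_unpack hu
  obtain ⟨hv1, hv2, hv3⟩ := contDiff_two_unpack hv
  set W : ℝ → ℝ := fun s => deriv u s * v s - u s * deriv v s with hWdef
  have hW : ∀ s, HasDerivAt W (deriv (deriv u) s * v s - u s * deriv (deriv v) s) s := by
    intro s
    have h1 := ((hu2 s).hasDerivAt.mul (hv1 s).hasDerivAt).sub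
      ((hu1 s).hasDerivAt.mul (hv2 s).hasDerivAt)
    convert h1 using 1
    · rfl
    · rfl
    · rfl
    ring
  have hWdiff : Differentiable ℝ W := fun s => (hW s).differentiableAt
  have hWmono : MonotoneOn W (Set.Icc a t) := by
    apply monotoneOn_of_deriv_nonneg (convex_Icc a t) hWdiff.continuous.continuousOn
      (hWdiff.differentiableOn)
    intro s hs
    rw [interior_Icc] at hs
    have hs' : s ∈ Set.Icc a t := Set.Ioo_subset_Icc_self hs
    rw [(hW s).deriv, hup s hs', hvq s hs']
    have := hsign s hs'
    nlinarith [this]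
  have hWa : W a = 0 := by simp [hWdef, hua, hua', hva, hva']
  have hW0 : ∀ s ∈ Set.Icc a t, 0 ≤ W s := by
    intro s hs
    have := hWmono (Set.left_mem_Icc.mpr hat) hs hs.1
    rw [hWa] at this; exact this
  set g : ℝ → ℝ := fun s => u s / v s with hgdef
  have hgmono : MonotoneOn g (Set.Icc a t) := by
    apply monotoneOn_of_deriv_nonneg (convex_Icc a t)
    · exact ContinuousOn.div hu1.continuous.continuousOn hv1.continuous.continuousOn
        (fun s hs => (hvpos s hs).ne')
    · intro s hs
      rw [interior_Icc] at hs
      have hs' : s ∈ Set.Icc a t := Set.Ioo_subset_Icc_self hs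
      exact ((hu1 s).hasDerivAt.div (hv1 s).hasDerivAt (hvpos s hs').ne').differentiableAt
        |>.differentiableWithinAt
    · intro s hs
      rw [interior_Icc] at hs
      have hs' : s ∈ Set.Icc a t := Set.Ioo_subset_Icc_self hs
      have hd := (hu1 s).hasDerivAt.div (hv1 s).hasDerivAt (hvpos s hs').ne'
      rw [show deriv g s = _ from hd.deriv]
      apply div_nonneg (hW0 s hs')
      positivity
  intro s hs
  have h1 : g a ≤ g s := hgmono (Set.left_mem_Icc.mpr hat) hs hs.1
  have hga : g a = 1 := by simp [hgdef, hua, hva]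
  rw [hga] at h1
  have hv' := hvpos s hs
  rw [hgdef] at h1
  have := (one_le_div hv').mp h1
  exact this

lemma rigidity_main {a b k : ℝ} {κ y : ℝ → ℝ} (hab : a < b)
    (hκ : ContinuousOn κ (Set.Icc a b)) (hy : ContDiff ℝ 2 y)
    (hode : ∀ s ∈ Set.Icc a b, deriv (deriv y) s = -(κ s) * y s)
    (heq : ∀ s ∈ Set.Icc a b, y s = ck k (s - a))
    (hcpos : ∀ s ∈ Set.Ioo a b, 0 < ck k (s - a)) :
    ∀ s ∈ Set.Icc a b, κ s = k := by
  apply eqOn_Icc_of_eqOn_Ioo hab hκ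
  intro s hs
  have hnb : Set.Icc a b ∈ nhds s := Icc_mem_nhds hs.1 hs.2
  have hev : y =ᶠ[nhds s] (fun r => ck k (r - a)) :=
    Filter.eventuallyEq_of_mem hnb heq
  have h2 : deriv (deriv y) s = deriv (deriv (fun r => ck k (r - a))) s :=
    (hev.deriv.deriv).eq_of_nhds
  rw [hode s (Set.Ioo_subset_Icc_self hs), deriv2_ckshift,
    heq s (Set.Ioo_subset_Icc_self hs)] at h2
  have hpos := hcpos s hs
  have h4 : -(κ s) = -k := mul_right_cancel₀ hpos.ne' h2
  linarith

lemma eq_of_integral_eq {a b : ℝ} (hab : a < b) {f g : ℝ → ℝ}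
    (hf : Continuous f) (hg : Continuous g)
    (hle : ∀ s ∈ Set.Icc a b, f s ≤ g s)
    (hint : (∫ s in a..b, f s) = ∫ s in a..b, g s) :
    ∀ s ∈ Set.Icc a b, f s = g s := by
  by_contra hcon
  push_neg at hcon
  obtain ⟨s0, hs0, hne⟩ := hcon
  have hpos : 0 < ∫ s in a..b, (g s - f s) := by
    apply intervalIntegral.integral_pos hab ((hg.sub hf).continuousOn)
    · intro r hr; exact sub_nonneg.mpr (hle r ⟨hr.1.le, hr.2⟩)
    · exact ⟨s0, hs0, sub_pos.mpr (lt_of_le_of_ne (hle s0 hs0) hne)⟩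
  rw [intervalIntegral.integral_sub (hg.intervalIntegrable a b)
    (hf.intervalIntegrable a b), hint] at hpos
  linarith

/-- comparison bounds for solutions of `x''' + κx' = 0` with
`x(a)=0`, `x'(a)=1`, `x''(a)=0` under curvature bounds `k₀ ≤ κ ≤ k₁`,
`k₁ ≤ (π/(2(b−a)))²`, together with the rigidity statement for equality. -/
theorem x_coordinate_bounds (a b k₀ k₁ : ℝ) (hab : a < b) (κ x : ℝ → ℝ)
    (hκ : ContinuousOn κ (Set.Icc a b)) (hx : ContDiff ℝ 3 x)
    (hode : ∀ s ∈ Set.Icc a b, iteratedDeriv 3 x s + κ s * deriv x s = 0)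
    (hxa : x a = 0) (hxa' : deriv x a = 1) (hxa'' : iteratedDeriv 2 x a = 0)
    (hκbd : ∀ s ∈ Set.Icc a b, k₀ ≤ κ s ∧ κ s ≤ k₁)
    (hk₁ : k₁ ≤ (Real.pi / (2 * (b - a))) ^ 2) :
    sk k₁ (b - a) ≤ x b ∧ x b ≤ sk k₀ (b - a) ∧
    (x b = sk k₁ (b - a) →
      ∀ s ∈ Set.Icc a b, κ s = k₁ ∧ x s = sk k₁ (s - a)) ∧
    (x b = sk k₀ (b - a) →
      ∀ s ∈ Set.Icc a b, κ s = k₀ ∧ x s = sk k₀ (s - a)) := by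
  have hL : 0 < b - a := sub_pos.mpr hab
  have hxd : Differentiable ℝ x := hx.differentiable (by norm_num)
  have hy2 : ContDiff ℝ 2 (deriv x) := by
    rw [show (3 : WithTop ℕ∞) = 2 + 1 by norm_num, contDiff_succ_iff_deriv] at hx
    exact hx.2.2
  have hodey : ∀ s ∈ Set.Icc a b, deriv (deriv (deriv x)) s = -(κ s) * deriv x s := by
    intro s hs
    have h := hode s hs
    have h3 : iteratedDeriv 3 x s = deriv (deriv (deriv x)) s := by
      simp [show (3:ℕ) = 2+1 from rfl, show (2:ℕ) = 1+1 from rfl, iteratedDeriv_succ,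
        iteratedDeriv_zero]
    rw [h3] at h; linarith
  have hya'' : deriv (deriv x) a = 0 := by
    have h : iteratedDeriv 2 x a = deriv (deriv x) a := by
      simp [show (2:ℕ) = 1+1 from rfl, iteratedDeriv_succ, iteratedDeriv_zero]
    rw [h] at hxa''; exact hxa''
  have hk01 : k₀ ≤ k₁ := by
    have h := hκbd a (Set.left_mem_Icc.mpr hab.le); linarith [h.1, h.2]
  have hk₀b : k₀ ≤ (Real.pi / (2 * (b - a))) ^ 2 := le_trans hk01 hk₁
  set c1 : ℝ → ℝ := fun r => ck k₁ (r - a) with hc1def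
  set c0 : ℝ → ℝ := fun r => ck k₀ (r - a) with hc0def
  have hc1C2 : ContDiff ℝ 2 c1 := contDiff_ckshift k₁ a
  have hc0C2 : ContDiff ℝ 2 c0 := contDiff_ckshift k₀ a
  have hc1a : c1 a = 1 := by rw [hc1def]; simp [ck_zero]
  have hc0a : c0 a = 1 := by rw [hc0def]; simp [ck_zero]
  have hc1a' : deriv c1 a = 0 := by rw [hc1def, deriv_ckshift]; simp [sk_zero]
  have hc0a' : deriv c0 a = 0 := by rw [hc0def, deriv_ckshift]; simp [sk_zero]
  have hc1ode : ∀ s : ℝ, deriv (deriv c1) s = -k₁ * c1 s := fun s => deriv2_ckshift k₁ a s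
  have hc0ode : ∀ s : ℝ, deriv (deriv c0) s = -k₀ * c0 s := fun s => deriv2_ckshift k₀ a s
  have hc1pos : ∀ s ∈ Set.Ico a b, 0 < c1 s := fun s hs =>
    ck_pos hL hk₁ (by linarith [hs.1]) (by linarith [hs.2])
  have hc0pos : ∀ s ∈ Set.Ico a b, 0 < c0 s := fun s hs =>
    ck_pos hL hk₀b (by linarith [hs.1]) (by linarith [hs.2])
  -- lower comparison, conditional on nonnegativity of deriv x
  have key : ∀ t ∈ Set.Icc a b, (∀ s ∈ Set.Icc a t, 0 ≤ deriv x s) →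
      ∀ s ∈ Set.Icc a t, c1 s ≤ deriv x s := by
    intro t ht hynn
    have main : ∀ r, a ≤ r → r ≤ t → r < b → ∀ s ∈ Set.Icc a r, c1 s ≤ deriv x s := by
      intro r har hrt hrb
      refine comparison_aux har (p := κ) (q := fun _ => k₁) hy2 hc1C2 hxa' hya'' hc1a hc1a'
        ?_ ?_ ?_ ?_
      · intro s hs
        exact hodey s ⟨hs.1, le_trans hs.2 hrb.le⟩
      · intro s hs
        exact hc1ode s
      · intro s hs
        have hsb : s ∈ Set.Icc a b := ⟨hs.1, le_trans hs.2 hrb.le⟩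
        have h1 : (0:ℝ) ≤ k₁ - κ s := by linarith [(hκbd s hsb).2]
        have h2 : 0 ≤ deriv x s := hynn s ⟨hs.1, le_trans hs.2 hrt⟩
        have h3 : 0 ≤ c1 s := (hc1pos s ⟨hs.1, lt_of_le_of_lt hs.2 hrb⟩).le
        exact mul_nonneg h1 (mul_nonneg h2 h3)
      · intro s hs
        exact hc1pos s ⟨hs.1, lt_of_le_of_lt hs.2 hrb⟩
    have hIco : ∀ s ∈ Set.Ico a b, s ≤ t → c1 s ≤ deriv x s := fun s hs hst =>
      main s hs.1 hst hs.2 s ⟨hs.1, le_rfl⟩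
    intro s hs
    rcases lt_or_eq_of_le (le_trans hs.2 ht.2) with hsb | hsb
    · exact hIco s ⟨hs.1, hsb⟩ hs.2
    · have htb : t = b := le_antisymm ht.2 (hsb ▸ hs.2)
      have h0 : 0 ≤ deriv x b - c1 b := by
        apply nonneg_at_right hab (hy2.continuous.sub hc1C2.continuous)
        intro r hr
        have := hIco r hr (by rw [htb]; exact hr.2.le)
        rw [Pi.sub_apply]; linarith
      rw [hsb]; linarith
  -- positivity of deriv x on [a, b)
  have hypos : ∀ s ∈ Set.Ico a b, 0 < deriv x s := by
    by_contra hcon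
    push_neg at hcon
    obtain ⟨s0, hs0, hs0'⟩ := hcon
    set S : Set ℝ := Set.Icc a b ∩ deriv x ⁻¹' Set.Iic 0 with hSdef
    have hs0S : s0 ∈ S := ⟨⟨hs0.1, hs0.2.le⟩, hs0'⟩
    have hSne : S.Nonempty := ⟨s0, hs0S⟩
    have hSc : IsClosed S := isClosed_Icc.inter (isClosed_Iic.preimage hy2.continuous)
    have hSbdd : BddBelow S := ⟨a, fun r hr => hr.1.1⟩
    set m := sInf S with hmdef
    have hmS : m ∈ S := hSc.csInf_mem hSne hSbdd
    have hma : a < m := by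
      rcases eq_or_lt_of_le hmS.1.1 with h | h
      · exfalso
        have h2 : deriv x m ≤ 0 := hmS.2
        rw [← h, hxa'] at h2
        linarith
      · exact h
    have hmb : m < b := lt_of_le_of_lt (csInf_le hSbdd hs0S) hs0.2
    have hpos' : ∀ s ∈ Set.Ico a m, 0 < deriv x s := by
      intro s hs
      by_contra hle
      push_neg at hle
      have hsS : s ∈ S := ⟨⟨hs.1, le_trans hs.2.le hmb.le⟩, hle⟩
      exact absurd (csInf_le hSbdd hsS) (not_le.mpr hs.2)
    have hnn : ∀ s ∈ Set.Icc a m, 0 ≤ deriv x s := by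
      intro s hs
      rcases lt_or_eq_of_le hs.2 with h | h
      · exact (hpos' s ⟨hs.1, h⟩).le
      · rw [h]
        exact nonneg_at_right hma hy2.continuous (fun r hr => (hpos' r hr).le)
    have h1 := key m ⟨hma.le, hmb.le⟩ hnn m ⟨hma.le, le_rfl⟩
    have h2 : 0 < c1 m := hc1pos m ⟨hma.le, hmb⟩
    have h3 : deriv x m ≤ 0 := hmS.2
    linarith
  have hynn : ∀ s ∈ Set.Icc a b, 0 ≤ deriv x s := by
    intro s hs
    rcases lt_or_eq_of_le hs.2 with h | h
    · exact (hypos s ⟨hs.1, h⟩).le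
    · rw [h]; exact nonneg_at_right hab hy2.continuous (fun r hr => (hypos r hr).le)
  have P2 : ∀ s ∈ Set.Icc a b, c1 s ≤ deriv x s :=
    key b (Set.right_mem_Icc.mpr hab.le) hynn
  have P3 : ∀ s ∈ Set.Icc a b, deriv x s ≤ c0 s := by
    have main0 : ∀ r, a ≤ r → r < b → ∀ s ∈ Set.Icc a r, deriv x s ≤ c0 s := by
      intro r har hrb
      refine comparison_aux har (p := fun _ => k₀) (q := κ) hc0C2 hy2 hc0a hc0a' hxa' hya''
        ?_ ?_ ?_ ?_
      · intro s hs; exact hc0ode s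
      · intro s hs; exact hodey s ⟨hs.1, le_trans hs.2 hrb.le⟩
      · intro s hs
        have hsb : s ∈ Set.Icc a b := ⟨hs.1, le_trans hs.2 hrb.le⟩
        have h1 : (0:ℝ) ≤ κ s - k₀ := by linarith [(hκbd s hsb).1]
        have h2 : 0 ≤ c0 s := (hc0pos s ⟨hs.1, lt_of_le_of_lt hs.2 hrb⟩).le
        have h3 : 0 ≤ deriv x s := hynn s hsb
        exact mul_nonneg h1 (mul_nonneg h2 h3)
      · intro s hs; exact hypos s ⟨hs.1, lt_of_le_of_lt hs.2 hrb⟩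
    intro s hs
    rcases lt_or_eq_of_le hs.2 with hsb | hsb
    · exact main0 s hs.1 hsb s ⟨hs.1, le_rfl⟩
    · have h0 : 0 ≤ c0 b - deriv x b := by
        apply nonneg_at_right hab (hc0C2.continuous.sub hy2.continuous)
        intro r hr
        have := main0 r hr.1 hr.2 r ⟨hr.1, le_rfl⟩
        rw [Pi.sub_apply]; linarith
      rw [hsb]; linarith
  -- FTC
  have hxint : ∀ t : ℝ, x t = ∫ s in a..t, deriv x s := by
    intro t
    have h := intervalIntegral.integral_eq_sub_of_hasDerivAt (f := x) (f' := deriv x)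
      (fun s _ => (hxd s).hasDerivAt) (hy2.continuous.intervalIntegrable a t)
    rw [hxa] at h
    linarith
  have hIcc1 : IntervalIntegrable c1 MeasureTheory.volume a b :=
    hc1C2.continuous.intervalIntegrable a b
  have hIcc0 : IntervalIntegrable c0 MeasureTheory.volume a b :=
    hc0C2.continuous.intervalIntegrable a b
  have hIy : IntervalIntegrable (deriv x) MeasureTheory.volume a b :=
    hy2.continuous.intervalIntegrable a b
  have hint1 : (∫ s in a..b, c1 s) = sk k₁ (b - a) := integral_ckshift k₁ a b
  have hint0 : (∫ s in a..b, c0 s) = sk k₀ (b - a) := integral_ckshift k₀ a b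
  have hlow : sk k₁ (b - a) ≤ x b := by
    rw [hxint b, ← hint1]
    exact intervalIntegral.integral_mono_on hab.le hIcc1 hIy P2
  have hupp : x b ≤ sk k₀ (b - a) := by
    rw [hxint b, ← hint0]
    exact intervalIntegral.integral_mono_on hab.le hIy hIcc0 P3
  refine ⟨hlow, hupp, ?_, ?_⟩
  · intro hEq
    have hint : (∫ s in a..b, c1 s) = ∫ s in a..b, deriv x s := by
      rw [hint1, ← hEq]; exact hxint b
    have heqy : ∀ s ∈ Set.Icc a b, c1 s = deriv x s :=
      eq_of_integral_eq hab hc1C2.continuous hy2.continuous P2 hint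
    have hκeq := rigidity_main hab hκ hy2 hodey (fun s hs => (heqy s hs).symm)
      (fun s hs => hc1pos s ⟨hs.1.le, hs.2⟩)
    intro s hs
    refine ⟨hκeq s hs, ?_⟩
    calc x s = ∫ r in a..s, deriv x r := hxint s
      _ = ∫ r in a..s, ck k₁ (r - a) := by
          apply intervalIntegral.integral_congr
          intro r hr
          rw [Set.uIcc_of_le hs.1] at hr
          exact (heqy r ⟨hr.1, le_trans hr.2 hs.2⟩).symm
      _ = sk k₁ (s - a) := integral_ckshift k₁ a s
  · intro hEq
    have hint : (∫ s in a..b, deriv x s) = ∫ s in a..b, c0 s := by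
      rw [hint0, ← hEq]; exact (hxint b).symm
    have heqy : ∀ s ∈ Set.Icc a b, deriv x s = c0 s :=
      eq_of_integral_eq hab hy2.continuous hc0C2.continuous P3 hint
    have hκeq := rigidity_main hab hκ hy2 hodey heqy
      (fun s hs => hc0pos s ⟨hs.1.le, hs.2⟩)
    intro s hs
    refine ⟨hκeq s hs, ?_⟩
    calc x s = ∫ r in a..s, deriv x r := hxint s
      _ = ∫ r in a..s, ck k₀ (r - a) := by
          apply intervalIntegral.integral_congr
          intro r hr
          rw [Set.uIcc_of_le hs.1] at hr
          exact heqy r ⟨hr.1, le_trans hr.2 hs.2⟩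
      _ = sk k₀ (s - a) := integral_ckshift k₀ a s
end
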